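/- arXiv:2405.16611 — 3 statements merged into one kernel-verified Lean document; each statement's English description precedes it below -/
import Mathlib

section
/- Let O be a deterministic object, let o1 ∈ ops(O) be one-sided non-commutative w.r.t. o2 ∈ ops(O) in spec(O), and let 𝓘 be a spec-available implementation of O that is consistent under M ∈ {TSO, RA}. Then there exist processes p1, p2 ∈ P, π1 ∈ traces(𝓘(o1,p1)), and π2 ∈ traces(𝓘(o2,p2)) such that, writing σ1 = π1|_mem and σ2 = π2|_mem: (a) if M = TSO, then σ1 or σ2 contains a fence or an RMW event; and (b) if M = RA, then neither σ1 nor σ2 is RW, and one of the following holds: (i) σ1 or σ2 contains an RMW event; (ii) σ1 or σ2 is not LTF; (iii) σ1 is LF and σ2 is TF; or (iv) σ1 is TF and σ2 is LF. -/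
set_option autoImplicit false

namespace WMM

universe u v

/-! ### Memory actions and events -/

inductive MemAct (Var Val : Type) : Type where
  | write (x : Var) (v : Val)
  | read (x : Var) (v : Val)
  | rmw (x : Var) (vold vnew : Val)
  | fence

structure MemEv (Proc Var Val : Type) : Type where
  proc : Proc
  act : MemAct Var Val

section Mem

variable {Proc Var Val : Type}

def MemEv.isWrite (e : MemEv Proc Var Val) : Prop := ∃ x v, e.act = MemAct.write x v
def MemEv.isRead (e : MemEv Proc Var Val) : Prop := ∃ x v, e.act = MemAct.read x v
def MemEv.isRMW (e : MemEv Proc Var Val) : Prop := ∃ x v w, e.act = MemAct.rmw x v w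
def MemEv.isFence (e : MemEv Proc Var Val) : Prop := e.act = MemAct.fence

/-- The set of processes appearing in an observable memory sequence. -/
def memProcs (σ : List (MemEv Proc Var Val)) : Set Proc := {p | ∃ e ∈ σ, MemEv.proc e = p}

end Mem

/-! ### Shuffles -/

/-- `Shuffle s1 s2 s` means `s` is an interleaving of `s1` and `s2`. -/
inductive Shuffle {α : Type u} : List α → List α → List α → Prop where
  | nil : Shuffle [] [] []
  | left {s1 s2 s : List α} (x : α) : Shuffle s1 s2 s → Shuffle (s1 ++ [x]) s2 (s ++ [x])
  | right {s1 s2 s : List α} (x : α) : Shuffle s1 s2 s → Shuffle s1 (s2 ++ [x]) (s ++ [x])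

/-! ### Paths of a labeled transition relation -/

inductive LTSPath {S : Type u} {L : Type v} (step : S → L → S → Prop) : S → List L → S → Prop where
  | nil (s : S) : LTSPath step s [] s
  | cons {s s' s'' : S} {l : L} {ls : List L} :
      step s l s' → LTSPath step s' ls s'' → LTSPath step s (l :: ls) s''

/-! ### Memory models -/

/-- A memory model: an LTS whose labels are memory events or the silent label `τ = none`. -/
structure MemModel (Proc Var Val : Type) : Type 1 where
  State : Type
  init : State
  step : State → Option (MemEv Proc Var Val) → State → Prop

section MemModel

variable {Proc Var Val : Type}

/-- A state is stable if no silent (`τ`) transition is enabled. -/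
def MemModel.Stable (M : MemModel Proc Var Val) (q : M.State) : Prop :=
  ∀ q', ¬ M.step q none q'

/-- Observable memory sequences from a state: traces with `τ` steps erased. -/
def MemModel.OTraces (M : MemModel Proc Var Val) (q : M.State) :
    Set (List (MemEv Proc Var Val)) :=
  {σ | ∃ (π : List (Option (MemEv Proc Var Val))) (q' : M.State),
      LTSPath M.step q π q' ∧ π.reduceOption = σ}

def WeaklyMergeable (M : MemModel Proc Var Val) (σ1 σ2 : List (MemEv Proc Var Val)) : Prop :=
  ∀ q0 : M.State, M.Stable q0 → σ1 ∈ M.OTraces q0 → σ2 ∈ M.OTraces q0 →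
    ∃ σ, Shuffle σ1 σ2 σ ∧ σ ∈ M.OTraces q0

def StronglyMergeable (M : MemModel Proc Var Val) (σ1 σ2 : List (MemEv Proc Var Val)) : Prop :=
  ∀ q0 : M.State, M.Stable q0 → σ1 ∈ M.OTraces q0 → σ2 ∈ M.OTraces q0 →
    ∀ σ, Shuffle σ1 σ2 σ → σ ∈ M.OTraces q0

/-- Weak/strong mergeability, selected by a Boolean flag. -/
def MemMergeable (strong : Bool) (M : MemModel Proc Var Val)
    (σ1 σ2 : List (MemEv Proc Var Val)) : Prop :=
  if strong then StronglyMergeable M σ1 σ2 else WeaklyMergeable M σ1 σ2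

end MemModel

/-! ### The SCM, TSO and RA memory models -/

section Models

variable (Proc Var Val : Type)

inductive SCMStep [DecidableEq Var] :
    (Var → Val) → Option (MemEv Proc Var Val) → (Var → Val) → Prop where
  | write (m : Var → Val) (p : Proc) (x : Var) (v : Val) :
      SCMStep m (some ⟨p, MemAct.write x v⟩) (Function.update m x v)
  | read (m : Var → Val) (p : Proc) (x : Var) :
      SCMStep m (some ⟨p, MemAct.read x (m x)⟩) m
  | rmw (m : Var → Val) (p : Proc) (x : Var) (vnew : Val) :
      SCMStep m (some ⟨p, MemAct.rmw x (m x) vnew⟩) (Function.update m x vnew)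
  | fence (m : Var → Val) (p : Proc) :
      SCMStep m (some ⟨p, MemAct.fence⟩) m

def SCMModel [DecidableEq Var] [Zero Val] : MemModel Proc Var Val where
  State := Var → Val
  init := fun _ => 0
  step := SCMStep Proc Var Val

inductive TSOStep [DecidableEq Proc] [DecidableEq Var] :
    (Var → Val) × (Proc → List (Var × Val)) → Option (MemEv Proc Var Val) →
      (Var → Val) × (Proc → List (Var × Val)) → Prop where
  | write (m : Var → Val) (b : Proc → List (Var × Val)) (p : Proc) (x : Var) (v : Val) :
      TSOStep (m, b) (some ⟨p, MemAct.write x v⟩)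
        (m, Function.update b p (b p ++ [(x, v)]))
  | readBuffer (m : Var → Val) (b : Proc → List (Var × Val)) (p : Proc) (x : Var) (v : Val) :
      ((b p).filter (fun pr => decide (pr.1 = x))).getLast? = some (x, v) →
      TSOStep (m, b) (some ⟨p, MemAct.read x v⟩) (m, b)
  | readMemory (m : Var → Val) (b : Proc → List (Var × Val)) (p : Proc) (x : Var) :
      (b p).filter (fun pr => decide (pr.1 = x)) = [] →
      TSOStep (m, b) (some ⟨p, MemAct.read x (m x)⟩) (m, b)
  | rmw (m : Var → Val) (b : Proc → List (Var × Val)) (p : Proc) (x : Var) (vnew : Val) :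
      b p = [] →
      TSOStep (m, b) (some ⟨p, MemAct.rmw x (m x) vnew⟩) (Function.update m x vnew, b)
  | fence (m : Var → Val) (b : Proc → List (Var × Val)) (p : Proc) :
      b p = [] → TSOStep (m, b) (some ⟨p, MemAct.fence⟩) (m, b)
  | propagate (m : Var → Val) (b : Proc → List (Var × Val)) (p : Proc) (x : Var) (v : Val)
      (β : List (Var × Val)) :
      b p = (x, v) :: β →
      TSOStep (m, b) none (Function.update m x v, Function.update b p β)

def TSOModel [DecidableEq Proc] [DecidableEq Var] [Zero Val] : MemModel Proc Var Val where
  State := (Var → Val) × (Proc → List (Var × Val))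
  init := (fun _ => 0, fun _ => [])
  step := TSOStep Proc Var Val

/-- A message of the RA memory model. -/
structure RAMsg (Var Val : Type) : Type where
  var : Var
  val : Val
  time : ℕ
  view : Var → ℕ

structure RAState (Proc Var Val : Type) : Type where
  mem : Set (RAMsg Var Val)
  view : Proc → Var → ℕ
  fview : Var → ℕ

end Models

/-- Pointwise join (maximum) of two views. -/
def viewJoin {Var : Type} (V1 V2 : Var → ℕ) : Var → ℕ := fun y => max (V1 y) (V2 y)

section RA

variable (Proc Var Val : Type)

inductive RAStep [DecidableEq Proc] [DecidableEq Var] :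
    RAState Proc Var Val → Option (MemEv Proc Var Val) → RAState Proc Var Val → Prop where
  | write (s : RAState Proc Var Val) (p : Proc) (x : Var) (v : Val) (t : ℕ) :
      s.view p x < t →
      (∀ μ ∈ s.mem, μ.var = x → μ.time ≠ t) →
      RAStep s (some ⟨p, MemAct.write x v⟩)
        ⟨insert ⟨x, v, t, Function.update (s.view p) x t⟩ s.mem,
         Function.update s.view p (Function.update (s.view p) x t), s.fview⟩
  | read (s : RAState Proc Var Val) (p : Proc) (x : Var) (v : Val) (V : Var → ℕ) :
      (⟨x, v, s.view p x, V⟩ : RAMsg Var Val) ∈ s.mem →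
      RAStep s (some ⟨p, MemAct.read x v⟩) s
  | rmw (s : RAState Proc Var Val) (p : Proc) (x : Var) (vexp vnew : Val) (V : Var → ℕ) :
      (⟨x, vexp, s.view p x, V⟩ : RAMsg Var Val) ∈ s.mem →
      (∀ μ ∈ s.mem, μ.var = x → μ.time ≠ s.view p x + 1) →
      RAStep s (some ⟨p, MemAct.rmw x vexp vnew⟩)
        ⟨insert ⟨x, vnew, s.view p x + 1, Function.update (s.view p) x (s.view p x + 1)⟩ s.mem,
         Function.update s.view p (Function.update (s.view p) x (s.view p x + 1)), s.fview⟩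
  | fence (s : RAState Proc Var Val) (p : Proc) :
      RAStep s (some ⟨p, MemAct.fence⟩)
        ⟨s.mem, Function.update s.view p (viewJoin (s.view p) s.fview),
         viewJoin (s.view p) s.fview⟩
  | propagate (s : RAState Proc Var Val) (p : Proc) (μ : RAMsg Var Val) :
      μ ∈ s.mem → s.view p μ.var < μ.time →
      RAStep s none
        ⟨s.mem, Function.update s.view p (viewJoin (s.view p) μ.view), s.fview⟩

def RAModel [DecidableEq Proc] [DecidableEq Var] [Zero Val] : MemModel Proc Var Val where
  State := RAState Proc Var Val
  init := ⟨{μ | ∃ x : Var, μ = ⟨x, 0, 0, fun _ => 0⟩}, fun _ _ => 0, fun _ => 0⟩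
  step := RAStep Proc Var Val

end RA

/-! ### Well-behaved memory models -/

section WellBehaved

variable {Proc Var Val : Type}

/-- Reachability by silent steps. -/
def TauReach (M : MemModel Proc Var Val) : M.State → M.State → Prop :=
  Relation.ReflTransGen (fun q q' => M.step q none q')

/-- A memory model is well-behaved if there is a simulation from SCM into its stable states. -/
def WellBehaved [DecidableEq Var] [Zero Val] (M : MemModel Proc Var Val) : Prop :=
  ∃ R : (Var → Val) → M.State → Prop,
    (∀ m q, R m q → M.Stable q) ∧
    R (fun _ => (0 : Val)) M.init ∧
    (∀ m q, R m q → ∀ (l : Option (MemEv Proc Var Val)) (m' : Var → Val),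
      SCMStep Proc Var Val m l m' →
      ∃ q1 q' : M.State, M.step q l q1 ∧ TauReach M q1 q' ∧ M.Stable q' ∧ R m' q')

end WellBehaved

/-! ### Patterns of observable memory sequences -/

section Patterns

variable {Proc Var Val : Type}

def IsSolo (σ : List (MemEv Proc Var Val)) : Prop :=
  ∀ e ∈ σ, ∀ e' ∈ σ, MemEv.proc e = MemEv.proc e'

def IsRW (σ : List (MemEv Proc Var Val)) : Prop :=
  ∀ e ∈ σ, MemEv.isWrite e ∨ MemEv.isRead e

def IsRWF (σ : List (MemEv Proc Var Val)) : Prop :=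
  ∀ e ∈ σ, MemEv.isWrite e ∨ MemEv.isRead e ∨ MemEv.isFence e

/-- Read-before-write: no read-after-write pattern on distinct variables. -/
def IsRBW (σ : List (MemEv Proc Var Val)) : Prop :=
  ∀ (k1 k2 : ℕ) (e1 e2 : MemEv Proc Var Val) (x y : Var) (v w : Val),
    k1 < k2 → σ[k1]? = some e1 → σ[k2]? = some e2 →
    e1.act = MemAct.write x v → e2.act = MemAct.read y w → x ≠ y →
    ∃ (k : ℕ) (e : MemEv Proc Var Val) (u : Val),
      k1 < k ∧ k < k2 ∧ σ[k]? = some e ∧ e.act = MemAct.write y u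

/-- Trailing-fence: no fence is immediately followed by a non-fence event. -/
def IsTF (σ : List (MemEv Proc Var Val)) : Prop :=
  ∀ (k : ℕ) (e e' : MemEv Proc Var Val),
    σ[k]? = some e → σ[k + 1]? = some e' → MemEv.isFence e → MemEv.isFence e'

/-- Leading-fence: no fence is immediately preceded by a non-fence event. -/
def IsLF (σ : List (MemEv Proc Var Val)) : Prop :=
  ∀ (k : ℕ) (e e' : MemEv Proc Var Val),
    σ[k]? = some e → σ[k + 1]? = some e' → MemEv.isFence e' → MemEv.isFence e

def IsLTF (σ : List (MemEv Proc Var Val)) : Prop :=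
  ∃ σ' σ'' : List (MemEv Proc Var Val), σ = σ' ++ σ'' ∧ IsLF σ' ∧ IsTF σ''

def IsPPTF [DecidableEq Proc] (σ : List (MemEv Proc Var Val)) : Prop :=
  ∀ p : Proc, IsTF (σ.filter (fun e => decide (e.proc = p)))

def IsPPLF [DecidableEq Proc] (σ : List (MemEv Proc Var Val)) : Prop :=
  ∀ p : Proc, IsLF (σ.filter (fun e => decide (e.proc = p)))

end Patterns

/-! ### Objects, events and histories -/

inductive ObjAct (Op Ret : Type) : Type where
  | inv (o : Op)
  | res (u : Ret)

structure ObjEv (Proc Op Ret : Type) : Type where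
  proc : Proc
  act : ObjAct Op Ret

inductive EvAct (Var Val Op Ret : Type) : Type where
  | mem (a : MemAct Var Val)
  | inv (o : Op)
  | res (u : Ret)

/-- A general event: a memory event or an object event of some process. -/
structure Ev (Proc Var Val Op Ret : Type) : Type where
  proc : Proc
  act : EvAct Var Val Op Ret

section Events

variable {Proc Var Val Op Ret : Type}

def ObjAct.isInv : ObjAct Op Ret → Prop
  | ObjAct.inv _ => True
  | _ => False

def ObjAct.isRes : ObjAct Op Ret → Prop
  | ObjAct.res _ => True
  | _ => False

def Ev.toMem : Ev Proc Var Val Op Ret → Option (MemEv Proc Var Val)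
  | ⟨p, EvAct.mem a⟩ => some ⟨p, a⟩
  | _ => none

def Ev.toObj : Ev Proc Var Val Op Ret → Option (ObjEv Proc Op Ret)
  | ⟨p, EvAct.inv o⟩ => some ⟨p, ObjAct.inv o⟩
  | ⟨p, EvAct.res u⟩ => some ⟨p, ObjAct.res u⟩
  | _ => none

/-- Restriction of an event sequence to its memory events. -/
def restrictMem (π : List (Ev Proc Var Val Op Ret)) : List (MemEv Proc Var Val) :=
  π.filterMap Ev.toMem

/-- Restriction of an event sequence to its object events. -/
def restrictObj (π : List (Ev Proc Var Val Op Ret)) : List (ObjEv Proc Op Ret) :=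
  π.filterMap Ev.toObj

def procsEv (π : List (Ev Proc Var Val Op Ret)) : Set Proc := {p | ∃ e ∈ π, Ev.proc e = p}

def procsObj (h : List (ObjEv Proc Op Ret)) : Set Proc := {p | ∃ e ∈ h, ObjEv.proc e = p}

def Ev.isWriteEv (e : Ev Proc Var Val Op Ret) : Prop :=
  ∃ x v, e.act = EvAct.mem (MemAct.write x v)

def Ev.isReadEv (e : Ev Proc Var Val Op Ret) : Prop :=
  ∃ x v, e.act = EvAct.mem (MemAct.read x v)

def Ev.isResEv (e : Ev Proc Var Val Op Ret) : Prop := ∃ u, e.act = EvAct.res u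

def Ev.isFenceEv (e : Ev Proc Var Val Op Ret) : Prop := e.act = EvAct.mem MemAct.fence

/-- The two-event history `⟨p : o ⇒ u⟩`. -/
def invres (p : Proc) (o : Op) (u : Ret) : List (ObjEv Proc Op Ret) :=
  [⟨p, ObjAct.inv o⟩, ⟨p, ObjAct.res u⟩]

/-- Complete sequential histories: concatenations of matching invocation–response pairs. -/
inductive CompleteSeq : List (ObjEv Proc Op Ret) → Prop where
  | nil : CompleteSeq []
  | cons (p : Proc) (o : Op) (u : Ret) {h : List (ObjEv Proc Op Ret)} :
      CompleteSeq h → CompleteSeq (⟨p, ObjAct.inv o⟩ :: ⟨p, ObjAct.res u⟩ :: h)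

/-- Sequential histories: prefixes of complete sequential histories. -/
def Sequential (h : List (ObjEv Proc Op Ret)) : Prop :=
  ∃ h' : List (ObjEv Proc Op Ret), CompleteSeq h' ∧ h <+: h'

def WellFormed [DecidableEq Proc] (h : List (ObjEv Proc Op Ret)) : Prop :=
  ∀ p : Proc, Sequential (h.filter (fun e => decide (e.proc = p)))

/-- Complete histories: well-formed, and each process's restriction is empty or
ends with a response event. -/
def CompleteH [DecidableEq Proc] (h : List (ObjEv Proc Op Ret)) : Prop :=
  WellFormed h ∧
    ∀ p : Proc, h.filter (fun e => decide (e.proc = p)) = [] ∨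
      ∃ e : ObjEv Proc Op Ret,
        (h.filter (fun e => decide (e.proc = p))).getLast? = some e ∧ e.act.isRes

end Events

/-! ### Reorderings and linearization -/

/-- `Reorder R s s'` : `s'` is an `R`-reordering of `s`. -/
def Reorder {α : Type u} (R : α → α → Prop) (s s' : List α) : Prop :=
  ∃ f : Fin s.length ≃ Fin s'.length,
    (∀ i : Fin s.length, s'.get (f i) = s.get i) ∧
    ∀ i j : Fin s.length, i < j → R (s.get i) (s.get j) → f i < f j

section Lin

variable {Proc Var Val Op Ret : Type}

/-- The `sproc` relation on general events: same process. -/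
def sprocEv (e1 e2 : Ev Proc Var Val Op Ret) : Prop := e1.proc = e2.proc

/-- The `lin` relation on object events. -/
def linRel (e1 e2 : ObjEv Proc Op Ret) : Prop :=
  e1.proc = e2.proc ∨ (e1.act.isRes ∧ e2.act.isInv)

/-- `h ⊑ H'`: some history in `H'` linearizes `h`. -/
def LinInto (Spec : Set (List (ObjEv Proc Op Ret))) (h : List (ObjEv Proc Op Ret)) : Prop :=
  ∃ h' ∈ Spec, Reorder linRel h h'

/-- A specification: a prefix-closed set of complete sequential histories. -/
def IsSpec (Spec : Set (List (ObjEv Proc Op Ret))) : Prop :=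
  (∀ h ∈ Spec, CompleteSeq h) ∧
  (∀ h ∈ Spec, ∀ h' : List (ObjEv Proc Op Ret), h' <+: h → CompleteSeq h' → h' ∈ Spec)

/-- A deterministic object: no two specification histories have a longest common prefix
ending with an invocation. -/
def Deterministic (Spec : Set (List (ObjEv Proc Op Ret))) : Prop :=
  ∀ h1 ∈ Spec, ∀ h2 ∈ Spec, ∀ (g : List (ObjEv Proc Op Ret)) (p : Proc) (o : Op),
    (g ++ [⟨p, ObjAct.inv o⟩]) <+: h1 → (g ++ [⟨p, ObjAct.inv o⟩]) <+: h2 →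
    ∃ e : ObjEv Proc Op Ret,
      (g ++ [⟨p, ObjAct.inv o⟩, e]) <+: h1 ∧ (g ++ [⟨p, ObjAct.inv o⟩, e]) <+: h2

def WeaklySpecMergeableAfter (Spec : Set (List (ObjEv Proc Op Ret)))
    (h0 h1 h2 : List (ObjEv Proc Op Ret)) : Prop :=
  LinInto Spec (h0 ++ h1) → LinInto Spec (h0 ++ h2) →
    ∃ h, Shuffle h1 h2 h ∧ LinInto Spec (h0 ++ h)

def StronglySpecMergeableAfter (Spec : Set (List (ObjEv Proc Op Ret)))
    (h0 h1 h2 : List (ObjEv Proc Op Ret)) : Prop :=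
  LinInto Spec (h0 ++ h1) → LinInto Spec (h0 ++ h2) →
    ∀ h, Shuffle h1 h2 h → LinInto Spec (h0 ++ h)

def SpecMergeableAfter (strong : Bool) (Spec : Set (List (ObjEv Proc Op Ret)))
    (h0 h1 h2 : List (ObjEv Proc Op Ret)) : Prop :=
  if strong then StronglySpecMergeableAfter Spec h0 h1 h2
  else WeaklySpecMergeableAfter Spec h0 h1 h2

/-- One-sided non-commutativity. -/
def OneSidedNonComm (Spec : Set (List (ObjEv Proc Op Ret))) (o1 o2 : Op) : Prop :=
  ∃ (h0 : List (ObjEv Proc Op Ret)) (p1 p2 : Proc) (u1 v1 u2 : Ret),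
    CompleteSeq h0 ∧ p1 ≠ p2 ∧ u1 ≠ v1 ∧
    h0 ++ invres p1 o1 u1 ∈ Spec ∧
    h0 ++ invres p2 o2 u2 ++ invres p1 o1 v1 ∈ Spec

/-- Two-sided non-commutativity. -/
def TwoSidedNonComm (Spec : Set (List (ObjEv Proc Op Ret))) (o1 o2 : Op) : Prop :=
  ∃ (h0 : List (ObjEv Proc Op Ret)) (p1 p2 : Proc) (u1 v1 u2 v2 : Ret),
    CompleteSeq h0 ∧ p1 ≠ p2 ∧ u1 ≠ v1 ∧ u2 ≠ v2 ∧
    h0 ++ invres p1 o1 u1 ++ invres p2 o2 v2 ∈ Spec ∧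
    h0 ++ invres p2 o2 u2 ++ invres p1 o1 v1 ∈ Spec

end Lin

/-! ### Implementations -/

/-- An implementation of an operation for a process `p`: an LTS labeled by events of `p`
in which a response event is always the last transition. -/
structure OpImpl (Proc Var Val Op Ret : Type) (p : Proc) : Type 1 where
  State : Type
  init : State
  step : State → Ev Proc Var Val Op Ret → State → Prop
  proc_eq : ∀ q e q', step q e q' → Ev.proc e = p
  res_final : ∀ (q : State) (u : Ret) (q' : State),
    step q ⟨p, EvAct.res u⟩ q' → ∀ e q'', ¬ step q' e q''

section Impl

variable {Proc Var Val Op Ret : Type}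

def OpImpl.traces {p : Proc} (Iop : OpImpl Proc Var Val Op Ret p) :
    Set (List (Ev Proc Var Val Op Ret)) :=
  {π | ∃ q : Iop.State, LTSPath Iop.step Iop.init π q}

/-- An implementation of an object. -/
def Impl (Proc Var Val Op Ret : Type) : Type 1 :=
  (o : Op) → (p : Proc) → OpImpl Proc Var Val Op Ret p

/-- Per-process states of the system induced by an implementation: `none` is idle. -/
def SIPState (I : Impl Proc Var Val Op Ret) (p : Proc) : Type :=
  Option ((o : Op) × (I o p).State)

/-- Per-process transitions of the system induced by an implementation. -/
inductive SIPStep (I : Impl Proc Var Val Op Ret) (p : Proc) :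
    SIPState I p → Ev Proc Var Val Op Ret → SIPState I p → Prop where
  | invoke (o : Op) :
      SIPStep I p none ⟨p, EvAct.inv o⟩ (some ⟨o, (I o p).init⟩)
  | memStep {o : Op} {q q' : (I o p).State} (a : MemAct Var Val) :
      (I o p).step q ⟨p, EvAct.mem a⟩ q' →
      SIPStep I p (some ⟨o, q⟩) ⟨p, EvAct.mem a⟩ (some ⟨o, q'⟩)
  | resStep {o : Op} {q q' : (I o p).State} (u : Ret) :
      (I o p).step q ⟨p, EvAct.res u⟩ q' →
      SIPStep I p (some ⟨o, q⟩) ⟨p, EvAct.res u⟩ none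

def SIState (I : Impl Proc Var Val Op Ret) : Type :=
  (p : Proc) → SIPState I p

/-- The system induced by an implementation interleaves the processes. -/
inductive SIStep [DecidableEq Proc] (I : Impl Proc Var Val Op Ret) :
    SIState I → Ev Proc Var Val Op Ret → SIState I → Prop where
  | mk (s : SIState I) (p : Proc) (e : Ev Proc Var Val Op Ret) (t : SIPState I p) :
      SIPStep I p (s p) e t → SIStep I s e (Function.update s p t)

def ImplTraces [DecidableEq Proc] (I : Impl Proc Var Val Op Ret) :
    Set (List (Ev Proc Var Val Op Ret)) :=
  {π | ∃ s : SIState I, LTSPath (SIStep I) (fun _ => none) π s}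

/-- Histories generated by `I` after `π0` under memory model `M`. -/
def GenHist [DecidableEq Proc] (π0 : List (Ev Proc Var Val Op Ret))
    (I : Impl Proc Var Val Op Ret) (M : MemModel Proc Var Val) :
    Set (List (ObjEv Proc Op Ret)) :=
  {h | ∃ π : List (Ev Proc Var Val Op Ret),
      π0 ++ π ∈ ImplTraces I ∧ restrictObj π = h ∧
      restrictMem (π0 ++ π) ∈ M.OTraces M.init}

/-- Consistency: every complete generated history linearizes into the specification. -/
def Consistent [DecidableEq Proc] (I : Impl Proc Var Val Op Ret)
    (M : MemModel Proc Var Val) (Spec : Set (List (ObjEv Proc Op Ret))) : Prop :=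
  ∀ h ∈ GenHist [] I M, CompleteH h → LinInto Spec h

/-- Availability after `h0` w.r.t. `h`. -/
def AvailableAfter [DecidableEq Proc] [DecidableEq Var] [Zero Val]
    (I : Impl Proc Var Val Op Ret) (h0 h : List (ObjEv Proc Op Ret)) : Prop :=
  ∀ π0 ∈ ImplTraces I,
    restrictMem π0 ∈ (SCMModel Proc Var Val).OTraces (SCMModel Proc Var Val).init →
    restrictObj π0 = h0 →
    h ∈ GenHist π0 I (SCMModel Proc Var Val)

def SpecAvailable [DecidableEq Proc] [DecidableEq Var] [Zero Val]
    (I : Impl Proc Var Val Op Ret) (Spec : Set (List (ObjEv Proc Op Ret))) : Prop :=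
  ∀ h0 h : List (ObjEv Proc Op Ret), CompleteSeq h0 → CompleteSeq h →
    h0 ++ h ∈ Spec → AvailableAfter I h0 h

end Impl

/-! ### Fence insertion -/

section Fence

variable {Proc Var Val Op Ret : Type}

/-- `FenceInsertion π π'` : `π'` is obtained from `π` by inserting fence events. -/
inductive FenceInsertion : List (Ev Proc Var Val Op Ret) → List (Ev Proc Var Val Op Ret) → Prop where
  | nil : FenceInsertion [] []
  | keep (e : Ev Proc Var Val Op Ret) {π π' : List (Ev Proc Var Val Op Ret)} :
      FenceInsertion π π' → FenceInsertion (e :: π) (e :: π')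
  | fence (p : Proc) {π π' : List (Ev Proc Var Val Op Ret)} :
      FenceInsertion π π' → FenceInsertion π (⟨p, EvAct.mem MemAct.fence⟩ :: π')

/-- Every write is separated from every later read or response by a fence. -/
def FencedWrites (π : List (Ev Proc Var Val Op Ret)) : Prop :=
  ∀ (i j : ℕ) (ei ej : Ev Proc Var Val Op Ret),
    i < j → π[i]? = some ei → π[j]? = some ej →
    Ev.isWriteEv ei → (Ev.isReadEv ej ∨ Ev.isResEv ej) →
    ∃ (k : ℕ) (ek : Ev Proc Var Val Op Ret),
      i < k ∧ k < j ∧ π[k]? = some ek ∧ Ev.isFenceEv ek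

/-- Histories generated by `I` under `M` (from the initial state). -/
def GeneratedHistories [DecidableEq Proc] (I : Impl Proc Var Val Op Ret)
    (M : MemModel Proc Var Val) : Set (List (ObjEv Proc Op Ret)) :=
  {h | ∃ π ∈ ImplTraces I, restrictObj π = h ∧ restrictMem π ∈ M.OTraces M.init}

end Fence

/-! ### The snapshot object -/

inductive SnapOp (W : Type) : Type where
  | update (w : W)
  | scan

inductive SnapRet (Proc W : Type) : Type where
  | ack
  | vec (v : Proc → Option W)

section Snapshot

variable {Proc W : Type}

/-- The sequential specification of the single-writer snapshot object, threaded
through the current contents `s`. -/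
inductive SnapSpecFrom [DecidableEq Proc] :
    (Proc → Option W) → List (ObjEv Proc (SnapOp W) (SnapRet Proc W)) → Prop where
  | nil (s : Proc → Option W) : SnapSpecFrom s []
  | update (s : Proc → Option W) (p : Proc) (w : W)
      {h : List (ObjEv Proc (SnapOp W) (SnapRet Proc W))} :
      SnapSpecFrom (Function.update s p (some w)) h →
      SnapSpecFrom s (⟨p, ObjAct.inv (SnapOp.update w)⟩ :: ⟨p, ObjAct.res SnapRet.ack⟩ :: h)
  | scan (s : Proc → Option W) (p : Proc)
      {h : List (ObjEv Proc (SnapOp W) (SnapRet Proc W))} :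
      SnapSpecFrom s h →
      SnapSpecFrom s (⟨p, ObjAct.inv SnapOp.scan⟩ :: ⟨p, ObjAct.res (SnapRet.vec s)⟩ :: h)

def SnapSpec (Proc W : Type) [DecidableEq Proc] :
    Set (List (ObjEv Proc (SnapOp W) (SnapRet Proc W))) :=
  {h | SnapSpecFrom (fun _ => none) h}

end Snapshot

/-!
One-sided non-commutativity gives a complete sequential history `h0` after which `p1 : o1` returns
`u1`, whereas it must return `v1 ≠ u1` after `p2 : o2 ⇒ u2`. By availability, after a run of `h0`
under SC both operations can run solo to completion. If the memory model admits the run of `o2`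
followed by the run of `o1` with `o1` not observing `o2`, the result is the complete sequential
history `h0 · ⟨p2 : o2 ⇒ u2⟩ · ⟨p1 : o1 ⇒ u1⟩`; it is its own only linearization, and determinism
excludes it from the specification. TSO admits this run when `o2` only reads and writes: its writes
stay in its store buffer. RA admits it when `o2` only reads and writes (its messages go above every
timestamp `o1` uses), and when `o1` has no RMW and only trailing fences (its messages go above all
of `o2`'s, so its reads see the older values). In the remaining cases suitable prefixes of the two
runs exhibit one of the listed patterns.
-/

section Paths

variable {S : Type u} {L : Type v}

theorem LTSPath.append {step : S → L → S → Prop} {s t u : S} {π1 π2 : List L}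
    (h1 : LTSPath step s π1 t) (h2 : LTSPath step t π2 u) : LTSPath step s (π1 ++ π2) u := by
  induction h1 with
  | nil => exact h2
  | cons hst _ ih => exact .cons hst (ih h2)

theorem LTSPath.split {step : S → L → S → Prop} {s u : S} {π1 π2 : List L}
    (h : LTSPath step s (π1 ++ π2) u) : ∃ t, LTSPath step s π1 t ∧ LTSPath step t π2 u := by
  induction π1 generalizing s with
  | nil => exact ⟨s, .nil s, h⟩
  | cons e π1 ih =>
    cases h with
    | cons hst hrest =>
      obtain ⟨t, h1, h2⟩ := ih hrest
      exact ⟨t, .cons hst h1, h2⟩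

inductive ObsPath (step : S → Option L → S → Prop) : S → List L → S → Prop where
  | nil (s : S) : ObsPath step s [] s
  | obs {s s' t : S} {e : L} {σ : List L} :
      step s (some e) s' → ObsPath step s' σ t → ObsPath step s (e :: σ) t
  | tau {s s' t : S} {σ : List L} :
      step s none s' → ObsPath step s' σ t → ObsPath step s σ t

variable {step : S → Option L → S → Prop}

theorem ObsPath.append {s t u : S} {σ1 σ2 : List L}
    (h1 : ObsPath step s σ1 t) (h2 : ObsPath step t σ2 u) : ObsPath step s (σ1 ++ σ2) u := by
  induction h1 with
  | nil => exact h2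
  | obs hst _ ih => exact .obs hst (ih h2)
  | tau hst _ ih => exact .tau hst (ih h2)

theorem ObsPath.split {s u : S} {σ1 σ2 : List L} (h : ObsPath step s (σ1 ++ σ2) u) :
    ∃ t, ObsPath step s σ1 t ∧ ObsPath step t σ2 u := by
  generalize hσ : σ1 ++ σ2 = σ at h
  induction h generalizing σ1 with
  | nil s =>
    obtain ⟨rfl, rfl⟩ := List.append_eq_nil_iff.mp hσ
    exact ⟨s, .nil s, .nil s⟩
  | @obs s s' t e σ hst hrest ih =>
    cases σ1 with
    | nil => exact ⟨s, .nil s, by simpa [← hσ] using ObsPath.obs hst hrest⟩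
    | cons e' σ1 =>
      obtain ⟨rfl, hσ'⟩ := List.cons_eq_cons.mp hσ
      obtain ⟨t', h1, h2⟩ := ih hσ'
      exact ⟨t', .obs hst h1, h2⟩
  | tau hst _ ih =>
    obtain ⟨t', h1, h2⟩ := ih hσ
    exact ⟨t', .tau hst h1, h2⟩

theorem ObsPath.exists_ltsPath {s t : S} {σ : List L} (h : ObsPath step s σ t) :
    ∃ π, LTSPath step s π t ∧ π.reduceOption = σ := by
  induction h with
  | nil s => exact ⟨[], .nil s, rfl⟩
  | obs hst _ ih =>
    obtain ⟨π, hπ, rfl⟩ := ih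
    exact ⟨_, .cons hst hπ, by simp⟩
  | tau hst _ ih =>
    obtain ⟨π, hπ, rfl⟩ := ih
    exact ⟨_, .cons hst hπ, by simp⟩

theorem LTSPath.obsPath {s t : S} {π : List (Option L)} (h : LTSPath step s π t) :
    ObsPath step s π.reduceOption t := by
  induction h with
  | nil s => exact .nil s
  | @cons s s' s'' l ls hst _ ih =>
    cases l with
    | none => exact .tau hst ih
    | some e => exact .obs hst ih

end Paths

theorem MemModel.mem_OTraces_iff {Proc Var Val : Type} {M : MemModel Proc Var Val} {q : M.State}
    {σ : List (MemEv Proc Var Val)} : σ ∈ M.OTraces q ↔ ∃ q', ObsPath M.step q σ q' := by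
  constructor
  · rintro ⟨π, q', hπ, rfl⟩
    exact ⟨q', hπ.obsPath⟩
  · rintro ⟨q', h⟩
    obtain ⟨π, hπ, hred⟩ := h.exists_ltsPath
    exact ⟨π, q', hπ, hred⟩

section SCM

variable {Proc Var Val : Type} [DecidableEq Var]

abbrev SCMRun (m : Var → Val) (σ : List (MemEv Proc Var Val)) (m' : Var → Val) : Prop :=
  ObsPath (SCMStep Proc Var Val) m σ m'

theorem SCMRun.eq {m m1 m2 : Var → Val} {σ : List (MemEv Proc Var Val)}
    (h1 : SCMRun m σ m1) (h2 : SCMRun m σ m2) : m1 = m2 := by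
  induction h1 with
  | nil => cases h2 with
    | nil => rfl
    | tau hst => cases hst
  | obs hst _ ih => cases h2 with
    | obs hst' hrest => cases hst <;> cases hst' <;> exact ih hrest
    | tau hst => cases hst
  | tau hst => cases hst

theorem mem_OTraces_scm_iff [Zero Val] {m : Var → Val} {σ : List (MemEv Proc Var Val)} :
    σ ∈ (SCMModel Proc Var Val).OTraces m ↔ ∃ m', SCMRun m σ m' :=
  MemModel.mem_OTraces_iff

end SCM

section Histories

variable {Proc Op Ret : Type}

theorem CompleteSeq.append {h h' : List (ObjEv Proc Op Ret)}
    (hh : CompleteSeq h) (hh' : CompleteSeq h') : CompleteSeq (h ++ h') := by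
  induction hh with
  | nil => exact hh'
  | cons p o u _ ih => exact .cons p o u ih

theorem completeSeq_invres (p : Proc) (o : Op) (u : Ret) : CompleteSeq (invres p o u) :=
  .cons p o u .nil

theorem CompleteSeq.tail_eq {a : ObjEv Proc Op Ret} {h : List (ObjEv Proc Op Ret)}
    (hh : CompleteSeq (a :: h)) : ∃ u t, h = ⟨a.proc, .res u⟩ :: t ∧ CompleteSeq t := by
  cases hh with
  | cons p o u ht => exact ⟨u, _, rfl, ht⟩

theorem CompleteSeq.filter [DecidableEq Proc] {h : List (ObjEv Proc Op Ret)}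
    (hh : CompleteSeq h) (p : Proc) : CompleteSeq (h.filter (fun e => decide (e.proc = p))) := by
  induction hh with
  | nil => exact .nil
  | @cons q o u t _ ih =>
    by_cases hq : q = p
    · simpa [List.filter_cons, hq] using CompleteSeq.cons q o u ih
    · simpa [List.filter_cons, hq] using ih

theorem CompleteSeq.exists_getLast?_isRes {h : List (ObjEv Proc Op Ret)} (hh : CompleteSeq h)
    (hne : h ≠ []) : ∃ e : ObjEv Proc Op Ret, h.getLast? = some e ∧ e.act.isRes := by
  induction hh with
  | nil => exact absurd rfl hne
  | @cons p o u t ht ih =>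
    rcases eq_or_ne t [] with rfl | ht'
    · exact ⟨⟨p, .res u⟩, rfl, trivial⟩
    · obtain ⟨e, he, hres⟩ := ih ht'
      obtain ⟨c, t', rfl⟩ := List.exists_cons_of_ne_nil ht'
      exact ⟨e, by rwa [List.getLast?_cons_cons, List.getLast?_cons_cons], hres⟩

theorem CompleteSeq.completeH [DecidableEq Proc] {h : List (ObjEv Proc Op Ret)}
    (hh : CompleteSeq h) : CompleteH h :=
  ⟨fun p => ⟨_, hh.filter p, List.prefix_refl _⟩,
    fun p => (eq_or_ne _ []).imp_right (hh.filter p).exists_getLast?_isRes⟩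

theorem CompleteSeq.linRel_getElem {h : List (ObjEv Proc Op Ret)} (hh : CompleteSeq h) :
    ∀ (i : ℕ) (hi : i + 1 < h.length), linRel h[i] h[i + 1] := by
  induction hh with
  | nil => intro i hi; simp at hi
  | @cons p o u t ht ih =>
    intro i hi
    match i with
    | 0 => exact .inl rfl
    | 1 =>
      cases ht with
      | nil => simp at hi
      | cons => exact .inr ⟨trivial, trivial⟩
    | n + 2 => simpa using ih n (by simp at hi; omega)

theorem _root_.Fin.strictMono_of_forall_val_eq_succ {n : ℕ} {α : Type*} [Preorder α] {g : Fin n → α}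
    (hg : ∀ i j : Fin n, (j : ℕ) = i + 1 → g i < g j) : StrictMono g := by
  cases n with
  | zero => exact fun i => i.elim0
  | succ n => exact Fin.strictMono_iff_lt_succ.2 fun i => hg _ _ (by simp)

/-- A complete sequential history is totally ordered by the transitive closure of `linRel`, so
it is its only linearization. -/
theorem CompleteSeq.eq_of_reorder {h h' : List (ObjEv Proc Op Ret)} (hh : CompleteSeq h)
    (hr : Reorder linRel h h') : h' = h := by
  obtain ⟨f, hget, hord⟩ := hr
  have hlen : h.length = h'.length := by simpa using Fintype.card_congr f
  have hmono : StrictMono fun i => Fin.cast hlen.symm (f i) :=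
    Fin.strictMono_of_forall_val_eq_succ fun i j hij => hord i j (by omega) <| by
      simpa [hij] using hh.linRel_getElem i (by omega)
  refine List.ext_getElem hlen.symm fun n h1 h2 => ?_
  have hn : f ⟨n, h2⟩ = ⟨n, h1⟩ :=
    Fin.ext (by simpa using congrArg Fin.val (congrFun hmono.eq_id ⟨n, h2⟩))
  simpa [hn] using hget ⟨n, h2⟩

theorem Deterministic.eq_of_append_invres {Spec : Set (List (ObjEv Proc Op Ret))}
    (hdet : Deterministic Spec) {g : List (ObjEv Proc Op Ret)} {p : Proc} {o : Op} {u v : Ret}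
    (hu : g ++ invres p o u ∈ Spec) (hv : g ++ invres p o v ∈ Spec) : u = v := by
  obtain ⟨e, ⟨tu, htu⟩, ⟨tv, htv⟩⟩ := hdet _ hu _ hv g p o
    ⟨[⟨p, .res u⟩], by simp [invres]⟩ ⟨[⟨p, .res v⟩], by simp [invres]⟩
  simp only [invres, List.append_assoc, List.cons_append, List.nil_append,
    List.append_cancel_left_eq, List.cons.injEq] at htu htv
  rw [htu.2.1] at htv
  simpa using htv.2.1

theorem Deterministic.not_linInto {Spec : Set (List (ObjEv Proc Op Ret))}
    (hdet : Deterministic Spec) {g : List (ObjEv Proc Op Ret)} (hg : CompleteSeq g) {p : Proc}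
    {o : Op} {u v : Ret} (hv : g ++ invres p o v ∈ Spec) (huv : u ≠ v) :
    ¬ LinInto Spec (g ++ invres p o u) := by
  rintro ⟨h', hS, hr⟩
  rw [(hg.append (completeSeq_invres p o u)).eq_of_reorder hr] at hS
  exact huv (hdet.eq_of_append_invres hS hv)

end Histories

theorem _root_.List.exists_prefix_filterMap_eq {α β : Type*} (f : α → Option β) {l : List α}
    {τ : List β} (hτ : τ <+: l.filterMap f) : ∃ l', l' <+: l ∧ l'.filterMap f = τ := by
  induction l generalizing τ with
  | nil => exact ⟨[], List.prefix_refl _, (List.prefix_nil.mp hτ).symm⟩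
  | cons a l ih =>
    cases ha : f a with
    | none =>
      obtain ⟨l', hl', rfl⟩ := ih (by simpa [ha] using hτ)
      exact ⟨a :: l', List.cons_prefix_cons.mpr ⟨rfl, hl'⟩, by simp [ha]⟩
    | some b =>
      rw [List.filterMap_cons_some ha, List.prefix_cons_iff] at hτ
      rcases hτ with rfl | ⟨t, rfl, ht⟩
      · exact ⟨[], List.nil_prefix, rfl⟩
      · obtain ⟨l', hl', rfl⟩ := ih ht
        exact ⟨a :: l', List.cons_prefix_cons.mpr ⟨rfl, hl'⟩, List.filterMap_cons_some ha⟩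

section Implementations

variable {Proc Var Val Op Ret : Type}

section Restrict

variable (p : Proc) (π π' : List (Ev Proc Var Val Op Ret))

@[simp] theorem restrictObj_cons_mem (a : MemAct Var Val) :
    restrictObj (⟨p, .mem a⟩ :: π) = restrictObj π := rfl

@[simp] theorem restrictObj_cons_inv (o : Op) :
    restrictObj (⟨p, .inv o⟩ :: π) = ⟨p, .inv o⟩ :: restrictObj π := rfl

@[simp] theorem restrictObj_cons_res (u : Ret) :
    restrictObj (⟨p, .res u⟩ :: π) = ⟨p, .res u⟩ :: restrictObj π := rfl

@[simp] theorem restrictObj_append : restrictObj (π ++ π') = restrictObj π ++ restrictObj π' :=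
  List.filterMap_append

@[simp] theorem restrictMem_cons_inv (o : Op) :
    restrictMem (⟨p, .inv o⟩ :: π) = restrictMem π := rfl

@[simp] theorem restrictMem_append : restrictMem (π ++ π') = restrictMem π ++ restrictMem π' :=
  List.filterMap_append

end Restrict

theorem restrictObj_filter_proc [DecidableEq Proc] (π : List (Ev Proc Var Val Op Ret)) (p : Proc) :
    restrictObj (π.filter fun e => decide (e.proc = p)) =
      (restrictObj π).filter fun e => decide (e.proc = p) := by
  induction π with
  | nil => rfl
  | cons e π ih =>
    obtain ⟨q, act⟩ := e
    by_cases hq : q = p <;> cases act <;> simp_all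

theorem OpImpl.proc_eq_of_mem_traces {p : Proc} {A : OpImpl Proc Var Val Op Ret p}
    {π : List (Ev Proc Var Val Op Ret)} (hπ : π ∈ A.traces) : ∀ e ∈ π, e.proc = p := by
  obtain ⟨q, hq⟩ := hπ
  generalize A.init = q0 at hq
  induction hq with
  | nil => simp
  | cons hst _ ih => simpa [A.proc_eq _ _ _ hst] using ih

theorem OpImpl.exists_mem_traces_restrictMem_eq {p : Proc} {A : OpImpl Proc Var Val Op Ret p}
    {π : List (Ev Proc Var Val Op Ret)} (hπ : π ∈ A.traces) {τ : List (MemEv Proc Var Val)}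
    (hτ : τ <+: restrictMem π) : ∃ π' ∈ A.traces, restrictMem π' = τ := by
  obtain ⟨π', ⟨ρ, rfl⟩, hπ'⟩ := List.exists_prefix_filterMap_eq _ hτ
  obtain ⟨q, hq⟩ := hπ
  obtain ⟨t, ht, -⟩ := hq.split
  exact ⟨π', ⟨t, ht⟩, hπ'⟩

theorem restrictMem_proc_eq {p : Proc} {π : List (Ev Proc Var Val Op Ret)}
    (h : ∀ e ∈ π, e.proc = p) : ∀ e ∈ restrictMem π, e.proc = p := by
  intro x hx
  obtain ⟨⟨q, act⟩, he, hx⟩ := List.mem_filterMap.mp hx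
  cases act <;> simp only [Ev.toMem, Option.some.injEq, reduceCtorEq] at hx
  exact hx ▸ h _ he

variable {I : Impl Proc Var Val Op Ret}

theorem SIPStep.proc_eq {p : Proc} {st st' : SIPState I p} {e : Ev Proc Var Val Op Ret}
    (h : SIPStep I p st e st') : e.proc = p := by
  cases h <;> rfl

theorem sipPath_eq_nil_of_restrictObj_eq_nil {p : Proc} {π : List (Ev Proc Var Val Op Ret)}
    {t : SIPState I p} (h : LTSPath (SIPStep I p) none π t) (hobj : restrictObj π = []) :
    π = [] := by
  cases h with
  | nil => rfl
  | cons hst => cases hst; simp at hobj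

theorem sipPath_run {p : Proc} {o : Op} {u : Ret} {π : List (Ev Proc Var Val Op Ret)}
    {q : (I o p).State} {t : SIPState I p} (h : LTSPath (SIPStep I p) (some ⟨o, q⟩) π t)
    (hobj : restrictObj π = [⟨p, .res u⟩]) : ∃ q', LTSPath (I o p).step q π q' := by
  induction π generalizing q with
  | nil => simp [restrictObj] at hobj
  | cons e π ih =>
    cases h with
    | cons hst hrest =>
      cases hst with
      | memStep a hstep =>
        obtain ⟨q', hq'⟩ := ih hrest (by simpa using hobj)
        exact ⟨q', .cons hstep hq'⟩
      | resStep u' hstep =>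
        obtain rfl := sipPath_eq_nil_of_restrictObj_eq_nil hrest (by simp at hobj; exact hobj.2)
        exact ⟨_, .cons hstep (.nil _)⟩

theorem sipPath_invres {p : Proc} {o : Op} {u : Ret} {π : List (Ev Proc Var Val Op Ret)}
    {t : SIPState I p} (h : LTSPath (SIPStep I p) none π t)
    (hobj : restrictObj π = invres p o u) :
    ∃ ρ ∈ (I o p).traces, π = ⟨p, .inv o⟩ :: ρ := by
  cases h with
  | nil => simp [restrictObj, invres] at hobj
  | cons hst hrest =>
    cases hst with
    | invoke o' =>
      simp only [restrictObj_cons_inv, invres, List.cons.injEq, ObjEv.mk.injEq,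
        ObjAct.inv.injEq, true_and] at hobj
      obtain ⟨rfl, hobj⟩ := hobj
      obtain ⟨q', hq'⟩ := sipPath_run hrest hobj
      exact ⟨_, ⟨q', hq'⟩, rfl⟩

theorem sipPath_eq_none {p : Proc} {π : List (Ev Proc Var Val Op Ret)} {st t : SIPState I p}
    (h : LTSPath (SIPStep I p) st π t) :
    (st = none → CompleteSeq (restrictObj π) → t = none) ∧
    (st ≠ none → ∀ u h', restrictObj π = ⟨p, .res u⟩ :: h' → CompleteSeq h' → t = none) := by
  induction h with
  | nil => exact ⟨fun h _ => h, fun _ u h' hobj => by simp [restrictObj] at hobj⟩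
  | cons hst _ ih =>
    cases hst with
    | invoke o =>
      refine ⟨fun _ hcs => ?_, fun h => absurd rfl h⟩
      rw [restrictObj_cons_inv] at hcs
      obtain ⟨u, h', hobj, hcs⟩ := hcs.tail_eq
      exact ih.2 (nofun) u h' hobj hcs
    | memStep a =>
      exact ⟨nofun, fun _ u h' hobj =>
        ih.2 nofun u h' (by simpa using hobj)⟩
    | resStep u' =>
      refine ⟨nofun, fun _ u h' hobj hcs => ih.1 rfl ?_⟩
      simp only [restrictObj_cons_res, List.cons.injEq] at hobj
      exact hobj.2 ▸ hcs

variable [DecidableEq Proc]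

theorem siPath_filter {s s' : SIState I} {π : List (Ev Proc Var Val Op Ret)}
    (h : LTSPath (SIStep I) s π s') (p : Proc) :
    LTSPath (SIPStep I p) (s p) (π.filter fun e => decide (e.proc = p)) (s' p) := by
  induction h with
  | nil => exact .nil _
  | @cons s _ _ e _ hst _ ih =>
    cases hst with | mk q _ t hq =>
    have he : e.proc = q := hq.proc_eq
    by_cases hqp : q = p
    · subst hqp
      rw [Function.update_self q t s] at ih
      simpa [List.filter_cons, he] using LTSPath.cons hq ih
    · rw [Function.update_of_ne (Ne.symm hqp) t s] at ih
      simpa [List.filter_cons, he, hqp] using ih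

theorem siPath_eq_idle {π : List (Ev Proc Var Val Op Ret)} {s : SIState I}
    (h : LTSPath (SIStep I) (fun _ => none) π s) (hobj : CompleteSeq (restrictObj π)) :
    s = fun _ => none :=
  funext fun p => (sipPath_eq_none (siPath_filter h p)).1 rfl <| by
    rw [restrictObj_filter_proc]
    exact hobj.filter p

theorem siPath_invres {π : List (Ev Proc Var Val Op Ret)} {s : SIState I} {p : Proc} {o : Op}
    {u : Ret} (h : LTSPath (SIStep I) (fun _ => none) π s) (hobj : restrictObj π = invres p o u) :
    ∃ ρ ∈ (I o p).traces, π = ⟨p, .inv o⟩ :: ρ := by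
  have hsolo : ∀ e ∈ π, e.proc = p := by
    intro e he
    by_contra hne
    have hnil := sipPath_eq_nil_of_restrictObj_eq_nil (siPath_filter h e.proc) <| by
      rw [restrictObj_filter_proc, hobj]
      simp [invres, Ne.symm hne]
    have hmem : e ∈ π.filter fun e' => decide (e'.proc = e.proc) := by simpa using he
    simp [hnil] at hmem
  have hp := siPath_filter h p
  rw [List.filter_eq_self.mpr (by simpa using hsolo)] at hp
  exact sipPath_invres hp hobj

end Implementations

section Race

variable {Proc Var Val Op Ret : Type} [DecidableEq Proc]

theorem Consistent.restrictMem_not_mem_OTraces {I : Impl Proc Var Val Op Ret}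
    {M : MemModel Proc Var Val} {Spec : Set (List (ObjEv Proc Op Ret))}
    (hcons : Consistent I M Spec) {π : List (Ev Proc Var Val Op Ret)} (hπ : π ∈ ImplTraces I)
    (hc : CompleteSeq (restrictObj π)) (hlin : ¬ LinInto Spec (restrictObj π)) :
    restrictMem π ∉ M.OTraces M.init :=
  fun hmem => hlin (hcons _ ⟨π, by simpa using hπ, rfl, by simpa using hmem⟩ hc.completeH)

variable [DecidableEq Var] [Zero Val]

structure SoloRuns (σ0 σ1 σ2 : List (MemEv Proc Var Val)) (p1 p2 : Proc) : Prop where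
  ne : p1 ≠ p2
  proc₁ : ∀ e ∈ σ1, e.proc = p1
  proc₂ : ∀ e ∈ σ2, e.proc = p2
  runs : ∃ m0, SCMRun (fun _ => 0) σ0 m0 ∧ (∃ m1, SCMRun m0 σ1 m1) ∧ ∃ m2, SCMRun m0 σ2 m2

structure Race (I : Impl Proc Var Val Op Ret) (Spec : Set (List (ObjEv Proc Op Ret)))
    (o1 o2 : Op) : Type where
  p1 : Proc
  p2 : Proc
  ρ1 : List (Ev Proc Var Val Op Ret)
  ρ2 : List (Ev Proc Var Val Op Ret)
  σ0 : List (MemEv Proc Var Val)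
  mem_traces₁ : ρ1 ∈ (I o1 p1).traces
  mem_traces₂ : ρ2 ∈ (I o2 p2).traces
  soloRuns : SoloRuns σ0 (restrictMem ρ1) (restrictMem ρ2) p1 p2
  not_mem_OTraces : ∀ M : MemModel Proc Var Val, Consistent I M Spec →
    σ0 ++ restrictMem ρ2 ++ restrictMem ρ1 ∉ M.OTraces M.init

theorem SpecAvailable.exists_solo {Spec : Set (List (ObjEv Proc Op Ret))}
    {I : Impl Proc Var Val Op Ret} (hav : SpecAvailable I Spec) {h0 : List (ObjEv Proc Op Ret)}
    (hh0 : CompleteSeq h0) {p : Proc} {o : Op} {u : Ret} (hS : h0 ++ invres p o u ∈ Spec)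
    {π0 : List (Ev Proc Var Val Op Ret)} (hπ0 : LTSPath (SIStep I) (fun _ => none) π0 fun _ => none)
    (hobj0 : restrictObj π0 = h0) {m0 : Var → Val} (hm0 : SCMRun (fun _ => 0) (restrictMem π0) m0) :
    ∃ ρ ∈ (I o p).traces, LTSPath (SIStep I) (fun _ => none) (⟨p, .inv o⟩ :: ρ) (fun _ => none) ∧
      restrictObj (⟨p, .inv o⟩ :: ρ) = invres p o u ∧ ∃ m, SCMRun m0 (restrictMem ρ) m := by
  obtain ⟨π, ⟨s, hs⟩, hobj, hmem⟩ := hav h0 _ hh0 (completeSeq_invres p o u) hS π0 ⟨_, hπ0⟩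
    (mem_OTraces_scm_iff.mpr ⟨_, hm0⟩) hobj0
  obtain ⟨s0, hπ0', hπ⟩ := hs.split
  obtain rfl := siPath_eq_idle hπ0' (hobj0 ▸ hh0)
  obtain rfl := siPath_eq_idle hπ (hobj ▸ completeSeq_invres p o u)
  obtain ⟨ρ, hρ, rfl⟩ := siPath_invres hπ hobj
  obtain ⟨_, hm⟩ := mem_OTraces_scm_iff.mp hmem
  obtain ⟨m0', hm0', hm⟩ := (by simpa using hm : SCMRun _ (restrictMem π0 ++ restrictMem ρ) _).split
  obtain rfl := SCMRun.eq hm0' hm0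
  exact ⟨ρ, hρ, hπ, hobj, _, hm⟩

/-- The object events of `π0`, the solo run of `o2` and then that of `o1` form a complete sequential
history that determinism forbids linearizing. -/
theorem Race.nonempty {Spec : Set (List (ObjEv Proc Op Ret))} (hSpec : IsSpec Spec)
    (hdet : Deterministic Spec) {o1 o2 : Op} (hnc : OneSidedNonComm Spec o1 o2)
    {I : Impl Proc Var Val Op Ret} (hav : SpecAvailable I Spec) :
    Nonempty (Race (Var := Var) (Val := Val) I Spec o1 o2) := by
  obtain ⟨h0, p1, p2, u1, v1, u2, hh0, hp, hu, hin1, hin2⟩ := hnc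
  have hh02 : CompleteSeq (h0 ++ invres p2 o2 u2) := hh0.append (completeSeq_invres p2 o2 u2)
  obtain ⟨π0, ⟨s0, hπ0⟩, hobj0, hmem0⟩ := hav [] h0 .nil hh0
    (by simpa using hSpec.2 _ hin1 h0 (List.prefix_append _ _) hh0) [] ⟨_, .nil _⟩
    ⟨[], _, .nil _, rfl⟩ rfl
  rw [List.nil_append] at hπ0 hmem0
  obtain rfl := siPath_eq_idle hπ0 (hobj0 ▸ hh0)
  obtain ⟨m0, hm0⟩ := mem_OTraces_scm_iff.mp hmem0
  obtain ⟨ρ1, hρ1, e1, hobj1, hm1⟩ := hav.exists_solo hh0 hin1 hπ0 hobj0 hm0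
  obtain ⟨ρ2, hρ2, e2, hobj2, hm2⟩ := hav.exists_solo hh0
    (hSpec.2 _ hin2 _ (List.prefix_append _ _) hh02) hπ0 hobj0 hm0
  refine ⟨⟨p1, p2, ρ1, ρ2, restrictMem π0, hρ1, hρ2,
    ⟨hp, restrictMem_proc_eq (OpImpl.proc_eq_of_mem_traces hρ1),
      restrictMem_proc_eq (OpImpl.proc_eq_of_mem_traces hρ2), ⟨_, hm0, hm1, hm2⟩⟩,
    fun M hcons => ?_⟩⟩
  have hobj : restrictObj (π0 ++ (⟨p2, .inv o2⟩ :: ρ2) ++ (⟨p1, .inv o1⟩ :: ρ1)) =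
      h0 ++ invres p2 o2 u2 ++ invres p1 o1 u1 := by
    simp only [restrictObj_append, hobj0, hobj1, hobj2]
  simpa using hcons.restrictMem_not_mem_OTraces ⟨_, (hπ0.append e2).append e1⟩
    (hobj ▸ hh02.append (completeSeq_invres p1 o1 u1))
    (hobj ▸ hdet.not_linInto hh02 hin2 hu)

end Race

section Patterns

variable {Proc Var Val : Type}

theorem MemEv.isWrite_or_isRead_iff (e : MemEv Proc Var Val) :
    e.isWrite ∨ e.isRead ↔ ¬ e.isRMW ∧ ¬ e.isFence := by
  obtain ⟨p, a⟩ := e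
  cases a <;> simp [MemEv.isWrite, MemEv.isRead, MemEv.isRMW, MemEv.isFence]

theorem isRW_iff {σ : List (MemEv Proc Var Val)} :
    IsRW σ ↔ ∀ e ∈ σ, ¬ e.isRMW ∧ ¬ e.isFence := by
  simp only [IsRW, MemEv.isWrite_or_isRead_iff]

theorem exists_isFence_or_isRMW_of_not_isRW {σ : List (MemEv Proc Var Val)} (h : ¬ IsRW σ) :
    ∃ e ∈ σ, e.isFence ∨ e.isRMW := by
  simpa [isRW_iff, or_iff_not_imp_right] using h

theorem not_isRW_of_isFence {σ : List (MemEv Proc Var Val)} {e : MemEv Proc Var Val} (he : e ∈ σ)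
    (hf : e.isFence) : ¬ IsRW σ :=
  fun h => (isRW_iff.mp h e he).2 hf

theorem isTF_nil : IsTF ([] : List (MemEv Proc Var Val)) := by
  intro k e e' h
  simp at h

theorem isTF_cons_iff {a : MemEv Proc Var Val} {σ : List (MemEv Proc Var Val)} :
    IsTF (a :: σ) ↔ (a.isFence → ∀ b ∈ σ.head?, b.isFence) ∧ IsTF σ := by
  constructor
  · intro h
    exact ⟨fun ha b hb => h 0 a b rfl (by simpa [List.head?_eq_getElem?] using hb) ha,
      fun k e e' hk hk' => h (k + 1) e e' (by simpa using hk) (by simpa using hk')⟩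
  · rintro ⟨h1, h2⟩ (_ | k) e e' hk hk'
    · simp only [List.getElem?_cons_zero, Option.some.injEq] at hk
      exact hk ▸ fun ha => h1 ha e' (by simpa [List.head?_eq_getElem?] using hk')
    · exact h2 k e e' (by simpa using hk) (by simpa using hk')

theorem isTF_append_of_forall_not_isFence {δ δ' : List (MemEv Proc Var Val)}
    (hδ : ∀ e ∈ δ, ¬ e.isFence) (hδ' : IsTF δ') : IsTF (δ ++ δ') := by
  induction δ with
  | nil => exact hδ'
  | cons a δ ih =>
    simp only [List.mem_cons, forall_eq_or_imp] at hδ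
    exact isTF_cons_iff.mpr ⟨fun ha => absurd ha hδ.1, ih hδ.2⟩

theorem IsRW.isTF {σ : List (MemEv Proc Var Val)} (h : IsRW σ) : IsTF σ := by
  simpa using isTF_append_of_forall_not_isFence (fun e he => (isRW_iff.mp h e he).2) isTF_nil

theorem exists_prefix_isTF_of_isFence {σ : List (MemEv Proc Var Val)}
    (h : ∃ e ∈ σ, e.isFence) : ∃ τ, τ <+: σ ∧ IsTF τ ∧ ∃ e ∈ τ, e.isFence := by
  induction σ with
  | nil => simp at h
  | cons a σ ih =>
    by_cases ha : a.isFence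
    · exact ⟨[a], List.cons_prefix_cons.mpr ⟨rfl, List.nil_prefix⟩,
        isTF_cons_iff.mpr ⟨by simp, isTF_nil⟩, a, List.mem_singleton_self a, ha⟩
    · obtain ⟨τ, hτ, hTF, e, he, hf⟩ := ih (by simpa [ha] using h)
      exact ⟨a :: τ, List.cons_prefix_cons.mpr ⟨rfl, hτ⟩,
        isTF_cons_iff.mpr ⟨fun h => absurd h ha, hTF⟩, e, List.mem_cons_of_mem a he, hf⟩

theorem IsLTF.exists_prefix_isLF {σ : List (MemEv Proc Var Val)} (h : IsLTF σ)
    (hTF : ¬ IsTF σ) : ∃ τ, τ <+: σ ∧ IsLF τ ∧ ∃ e ∈ τ, e.isFence := by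
  obtain ⟨δ, δ', rfl, hLF, hTF'⟩ := h
  by_contra hno
  exact hTF (isTF_append_of_forall_not_isFence
    (fun e he hf => hno ⟨δ, List.prefix_append _ _, hLF, e, he, hf⟩) hTF')

theorem IsTF.exists_eq_append {σ : List (MemEv Proc Var Val)} (hTF : IsTF σ)
    (hRMW : ∀ e ∈ σ, ¬ e.isRMW) :
    ∃ w f, σ = w ++ f ∧ IsRW w ∧ ∀ e ∈ f, e.isFence := by
  induction σ with
  | nil => exact ⟨[], [], rfl, by simp [IsRW], by simp⟩
  | cons a σ ih =>
    simp only [List.mem_cons, forall_eq_or_imp] at hRMW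
    obtain ⟨ha, hTF⟩ := isTF_cons_iff.mp hTF
    obtain ⟨w, f, rfl, hw, hf⟩ := ih hTF hRMW.2
    by_cases hfa : a.isFence
    · obtain rfl : w = [] := by
        cases w with
        | nil => rfl
        | cons b w =>
          exact absurd (ha hfa b (by simp)) (isRW_iff.mp hw b (by simp)).2
      exact ⟨[], a :: f, rfl, by simp [IsRW], by simpa [hfa] using hf⟩
    · refine ⟨a :: w, f, rfl, ?_, hf⟩
      simpa [IsRW, MemEv.isWrite_or_isRead_iff, hfa, hRMW.1] using hw

/-- Conclusion (b) of the theorem, for the memory sequences of the two operations. -/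
def RALowerBound (σ1 σ2 : List (MemEv Proc Var Val)) : Prop :=
  ¬ IsRW σ1 ∧ ¬ IsRW σ2 ∧
    ((∃ e ∈ σ1, MemEv.isRMW e) ∨ (∃ e ∈ σ2, MemEv.isRMW e) ∨ ¬ IsLTF σ1 ∨ ¬ IsLTF σ2 ∨
      (IsLF σ1 ∧ IsTF σ2) ∨ (IsTF σ1 ∧ IsLF σ2))

/-- The hypotheses exclude the two shapes that RA can merge. Unless one of the sequences has an RMW
or is not LTF, the leading-fence part of `σ1` and the prefix of `σ2` up to its first fence exhibit
case (iii). -/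
theorem exists_prefix_raLowerBound {σ1 σ2 : List (MemEv Proc Var Val)}
    (h1 : ¬ ((∀ e ∈ σ1, ¬ e.isRMW) ∧ IsTF σ1)) (h2 : ¬ IsRW σ2) :
    ∃ τ1 τ2, τ1 <+: σ1 ∧ τ2 <+: σ2 ∧ RALowerBound τ1 τ2 := by
  have h1' : ¬ IsRW σ1 := fun h => h1 ⟨fun e he => (isRW_iff.mp h e he).1, h.isTF⟩
  by_cases hD : (∃ e ∈ σ1, e.isRMW) ∨ (∃ e ∈ σ2, e.isRMW) ∨ ¬ IsLTF σ1 ∨ ¬ IsLTF σ2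
  · refine ⟨σ1, σ2, List.prefix_refl _, List.prefix_refl _, h1', h2, ?_⟩
    rcases hD with h | h | h | h <;> simp only [h, true_or, or_true, not_false_eq_true]
  push Not at hD
  obtain ⟨hr1, hr2, hl1, -⟩ := hD
  obtain ⟨τ1, hτ1, hLF, e1, he1, hf1⟩ := hl1.exists_prefix_isLF fun h => h1 ⟨hr1, h⟩
  obtain ⟨τ2, hτ2, hTF, e2, he2, hf2⟩ := exists_prefix_isTF_of_isFence <|
    (exists_isFence_or_isRMW_of_not_isRW h2).imp fun e ⟨he, h⟩ => ⟨he, h.resolve_right (hr2 e he)⟩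
  exact ⟨τ1, τ2, hτ1, hτ2, not_isRW_of_isFence he1 hf1, not_isRW_of_isFence he2 hf2,
    .inr <| .inr <| .inr <| .inr <| .inl ⟨hLF, hTF⟩⟩

end Patterns

section TSO

variable {Proc Var Val : Type} [DecidableEq Proc] [DecidableEq Var]

/-- The memory as seen by a process whose store buffer `l` is pending over the main memory `m`. -/
def applyWrites (m : Var → Val) (l : List (Var × Val)) : Var → Val :=
  l.foldl (fun m w => Function.update m w.1 w.2) m

theorem applyWrites_concat (m : Var → Val) (l : List (Var × Val)) (x : Var) (v : Val) :
    applyWrites m (l ++ [(x, v)]) = Function.update (applyWrites m l) x v := by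
  simp [applyWrites, List.foldl_append]

theorem applyWrites_eq_or_getLast? (m : Var → Val) (l : List (Var × Val)) (x : Var) :
    (l.filter (fun w => decide (w.1 = x)) = [] ∧ applyWrites m l x = m x) ∨
      (l.filter (fun w => decide (w.1 = x))).getLast? = some (x, applyWrites m l x) := by
  induction l using List.reverseRecOn with
  | nil => exact .inl ⟨rfl, rfl⟩
  | append_singleton l w ih =>
    obtain ⟨y, v⟩ := w
    rw [applyWrites_concat, List.filter_append]
    by_cases hxy : y = x
    · subst hxy
      simp
    · simpa [hxy, Function.update_of_ne (Ne.symm hxy)] using ih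

theorem tso_of_scmRun_flushed {m m' : Var → Val} {σ : List (MemEv Proc Var Val)}
    (hσ : SCMRun m σ m') (B : Proc → List (Var × Val)) (hB : ∀ e ∈ σ, B e.proc = []) :
    ObsPath (TSOStep Proc Var Val) (m, B) σ (m', B) := by
  induction hσ with
  | nil => exact .nil _
  | tau hst => cases hst
  | @obs m _ _ _ _ hst _ ih =>
    simp only [List.mem_cons, forall_eq_or_imp] at hB
    obtain ⟨hB0, hB⟩ := hB
    cases hst with
    | write p x v =>
      replace hB0 : B p = [] := hB0
      have hw := TSOStep.write m B p x v
      have hf :=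
        TSOStep.propagate m (Function.update B p (B p ++ [(x, v)])) p x v [] (by simp [hB0])
      rw [Function.update_idem, (Function.update_eq_self_iff (f := B) (a := p)).mpr hB0.symm] at hf
      exact .obs hw (.tau hf (ih hB))
    | read p x => exact .obs (TSOStep.readMemory _ B p x (by simp [hB0])) (ih hB)
    | rmw p x v => exact .obs (TSOStep.rmw _ B p x v hB0) (ih hB)
    | fence p => exact .obs (TSOStep.fence _ B p hB0) (ih hB)

theorem tso_of_scmRun_buffered {p : Proc} {m m' : Var → Val} {σ : List (MemEv Proc Var Val)}
    {B : Proc → List (Var × Val)} (hσ : SCMRun (applyWrites m (B p)) σ m')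
    (hp : ∀ e ∈ σ, e.proc = p) (hRW : IsRW σ) :
    ∃ B', ObsPath (TSOStep Proc Var Val) (m, B) σ (m, B') ∧ ∀ q, q ≠ p → B' q = B q := by
  induction σ generalizing B with
  | nil => exact ⟨B, .nil _, fun _ _ => rfl⟩
  | cons e σ ih =>
    simp only [List.mem_cons, forall_eq_or_imp] at hp
    obtain ⟨hp0, hp⟩ := hp
    have hRW' : IsRW σ := fun e he => hRW e (List.mem_cons_of_mem _ he)
    cases hσ with
    | tau hst => cases hst
    | obs hst hrest =>
      cases hst with
      | write q x v =>
        obtain rfl : q = p := hp0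
        obtain ⟨B', hB', hB'q⟩ := ih (B := Function.update B q (B q ++ [(x, v)]))
          (by simpa [applyWrites_concat] using hrest) hp hRW'
        refine ⟨B', .obs (TSOStep.write m B q x v) hB', fun r hr => ?_⟩
        rw [hB'q r hr, Function.update_of_ne hr]
      | read q x =>
        obtain rfl : q = p := hp0
        obtain ⟨B', hB', hB'q⟩ := ih hrest hp hRW'
        refine ⟨B', .obs ?_ hB', hB'q⟩
        rcases applyWrites_eq_or_getLast? m (B q) x with ⟨hnil, heq⟩ | hlast
        · exact heq ▸ TSOStep.readMemory m B q x hnil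
        · exact TSOStep.readBuffer m B q x _ hlast
      | rmw => simp [IsRW, MemEv.isWrite, MemEv.isRead] at hRW
      | fence => simp [IsRW, MemEv.isWrite, MemEv.isRead] at hRW

theorem SoloRuns.mem_OTraces_tso [Zero Val] {σ0 σ1 σ2 : List (MemEv Proc Var Val)} {p1 p2 : Proc}
    (h : SoloRuns σ0 σ1 σ2 p1 p2) (hRW : IsRW σ2) :
    σ0 ++ σ2 ++ σ1 ∈ (TSOModel Proc Var Val).OTraces (TSOModel Proc Var Val).init := by
  obtain ⟨m0, h0, ⟨m1, h1⟩, ⟨m2, h2⟩⟩ := h.runs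
  obtain ⟨B, e2, hB⟩ := tso_of_scmRun_buffered (m := m0) (B := fun _ => []) h2 h.proc₂ hRW
  have e1 := tso_of_scmRun_flushed h1 B fun e he => by rw [h.proc₁ e he, hB _ h.ne]
  exact MemModel.mem_OTraces_iff.mpr
    ⟨_, ((tso_of_scmRun_flushed h0 (fun _ => []) fun _ _ => rfl).append e2).append e1⟩

end TSO

section RA

variable {Proc Var Val : Type}

namespace RAState

/-- The common target state of `RAStep.write` and `RAStep.rmw`. -/
def addMsg [DecidableEq Proc] [DecidableEq Var] (s : RAState Proc Var Val) (p : Proc) (x : Var)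
    (v : Val) (t : ℕ) : RAState Proc Var Val :=
  ⟨insert ⟨x, v, t, Function.update (s.view p) x t⟩ s.mem,
    Function.update s.view p (Function.update (s.view p) x t), s.fview⟩

section AddMsg

variable [DecidableEq Proc] [DecidableEq Var] (s : RAState Proc Var Val) (p : Proc) (x : Var)
  (v : Val) (t : ℕ)

@[simp] theorem addMsg_mem :
    (s.addMsg p x v t).mem = insert ⟨x, v, t, Function.update (s.view p) x t⟩ s.mem := rfl

@[simp] theorem addMsg_view :
    (s.addMsg p x v t).view = Function.update s.view p (Function.update (s.view p) x t) := rfl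

end AddMsg

/-- `s` can replay SCM runs of the processes in `P` from the memory `m`, using the still free
timestamps in `(a x, b x]` for new messages of `x`. -/
structure Simulates (s : RAState Proc Var Val) (P : Set Proc) (m : Var → Val)
    (T a b : Var → ℕ) : Prop where
  view_le : ∀ p ∈ P, s.view p ≤ T
  msg : ∀ x, ∃ V, V ≤ T ∧ V x = T x ∧ (⟨x, m x, T x, V⟩ : RAMsg Var Val) ∈ s.mem
  le : T ≤ a
  gap : ∀ μ ∈ s.mem, μ.time ≤ a μ.var ∨ b μ.var < μ.time

structure Extends (P : Set Proc) (a b : Var → ℕ) (s s' : RAState Proc Var Val) : Prop where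
  view_eq : ∀ q ∉ P, s'.view q = s.view q
  mem_subset : s.mem ⊆ s'.mem
  mem_new : ∀ μ ∈ s'.mem, μ ∈ s.mem ∨ a μ.var < μ.time ∧ μ.time ≤ b μ.var

variable {s s1 s2 s3 : RAState Proc Var Val} {P : Set Proc} {m : Var → Val} {T a b : Var → ℕ}

theorem Extends.refl : s.Extends P a b s :=
  ⟨fun _ _ => rfl, subset_rfl, fun _ h => .inl h⟩

theorem Extends.trans {a' : Var → ℕ} (h1 : s1.Extends P a b s2) (h2 : s2.Extends P a' b s3)
    (ha : a ≤ a') : s1.Extends P a b s3 := by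
  refine ⟨fun q hq => (h2.view_eq q hq).trans (h1.view_eq q hq),
    h1.mem_subset.trans h2.mem_subset, fun μ hμ => ?_⟩
  rcases h2.mem_new μ hμ with hμ | ⟨hlt, hle⟩
  · exact h1.mem_new μ hμ
  · exact .inr ⟨(ha μ.var).trans_lt hlt, hle⟩

theorem Simulates.fresh (h : s.Simulates P m T a b) {x : Var} (hx : a x < b x) :
    ∀ μ ∈ s.mem, μ.var = x → μ.time ≠ a x + 1 := by
  rintro μ hμ rfl
  rcases h.gap μ hμ with h' | h' <;> omega

structure Flat (s : RAState Proc Var Val) (m : Var → Val) (T : Var → ℕ) : Prop where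
  view_le : ∀ q, s.view q ≤ T
  fview_le : s.fview ≤ T
  msg : ∀ x, ∃ V, V ≤ T ∧ V x = T x ∧ (⟨x, m x, T x, V⟩ : RAMsg Var Val) ∈ s.mem
  time_le : ∀ μ ∈ s.mem, μ.time ≤ T μ.var

theorem Flat.simulates (hs : s.Flat m T) (hTa : T ≤ a) : s.Simulates P m T a b :=
  ⟨fun q _ => hs.view_le q, hs.msg, hTa, fun μ hμ => .inl ((hs.time_le μ hμ).trans (hTa _))⟩

theorem Flat.simulates_of_extends {s' : RAState Proc Var Val} {c d : Var → ℕ} (hs : s.Flat m T)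
    (hext : s.Extends P c d s') {p : Proc} (hp : p ∉ P) (hTa : T ≤ a) (hgap : d ≤ a ∨ b ≤ c) :
    s'.Simulates {p} m T a b := by
  refine ⟨fun q hq => ?_, fun x => ?_, hTa, fun μ hμ => ?_⟩
  · rw [Set.mem_singleton_iff.mp hq, hext.view_eq p hp]
    exact hs.view_le p
  · obtain ⟨V, hVT, hVx, hμ⟩ := hs.msg x
    exact ⟨V, hVT, hVx, hext.mem_subset hμ⟩
  · rcases hext.mem_new μ hμ with hμ | ⟨hlt, hle⟩
    · exact .inl ((hs.time_le μ hμ).trans (hTa _))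
    · exact hgap.imp (fun h => hle.trans (h _)) fun h => (h _).trans_lt hlt

variable [DecidableEq Proc] [DecidableEq Var]

theorem Simulates.catchUp (h : s.Simulates P m T a b) {p : Proc} (hp : p ∈ P) (x : Var) :
    ∃ s', ObsPath (RAStep Proc Var Val) s [] s' ∧ s'.Simulates P m T a b ∧
      s'.view p x = T x ∧ s'.fview = s.fview ∧ s.Extends P a b s' := by
  obtain ⟨V, hVT, hVx, hμ⟩ := h.msg x
  by_cases hlt : s.view p x < T x
  · refine ⟨_, .tau (RAStep.propagate s p _ hμ hlt) (.nil _), ⟨fun q hq => ?_, h.msg, h.le, h.gap⟩,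
      by simp [viewJoin, hVx, hlt.le], rfl, ⟨fun q hq => ?_, subset_rfl, fun _ h => .inl h⟩⟩
    · by_cases hqp : q = p
      · subst hqp
        intro y
        simpa [viewJoin] using ⟨h.view_le q hp y, hVT y⟩
      · simpa [hqp] using h.view_le q hq
    · simp [show q ≠ p from fun h => hq (h ▸ hp)]
  · exact ⟨s, .nil s, h, le_antisymm (h.view_le p hp x) (not_lt.mp hlt), rfl, .refl⟩

theorem Simulates.addMsg (h : s.Simulates P m T a b) {p : Proc} (hp : p ∈ P) {x : Var}
    (hx : a x < b x) (v : Val) :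
    (s.addMsg p x v (a x + 1)).Simulates P (Function.update m x v)
        (Function.update T x (a x + 1)) (Function.update a x (a x + 1)) b ∧
      s.Extends P a b (s.addMsg p x v (a x + 1)) := by
  have hTT : T ≤ Function.update T x (a x + 1) := by
    intro y
    by_cases hy : y = x
    · subst hy; simpa using (h.le y).trans (Nat.le_succ _)
    · simp [hy]
  have hvp : Function.update (s.view p) x (a x + 1) ≤ Function.update T x (a x + 1) := by
    intro y
    by_cases hy : y = x
    · subst hy; simp
    · simpa [hy] using h.view_le p hp y
  refine ⟨⟨fun q hq => ?_, fun y => ?_, fun y => ?_, fun μ hμ => ?_⟩,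
    ⟨fun q hq => ?_, Set.subset_insert _ _, fun μ hμ => ?_⟩⟩
  · by_cases hqp : q = p
    · subst hqp; simpa using hvp
    · simpa [hqp] using (h.view_le q hq).trans hTT
  · by_cases hy : y = x
    · subst hy; exact ⟨_, hvp, by simp, by simp⟩
    · obtain ⟨V, hVT, hVy, hμ⟩ := h.msg y
      exact ⟨V, hVT.trans hTT, by simpa [hy] using hVy, by simp [hy, hμ]⟩
  · by_cases hy : y = x
    · subst hy; simp
    · simpa [hy] using h.le y
  · simp only [addMsg_mem, Set.mem_insert_iff] at hμ
    rcases hμ with rfl | hμ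
    · simp
    · rcases h.gap μ hμ with h' | h'
      · left
        by_cases hy : μ.var = x
        · simp [hy] at h' ⊢; omega
        · simpa [hy] using h'
      · exact .inr h'
  · simp [show q ≠ p from fun h => hq (h ▸ hp)]
  · simp only [addMsg_mem, Set.mem_insert_iff] at hμ
    rcases hμ with rfl | hμ
    · exact .inr ⟨by simp, by simpa using hx⟩
    · exact .inl hμ

theorem update_succ_add_le {a b : Var → ℕ} {n : ℕ} (h : ∀ y, a y + (n + 1) ≤ b y) (x y : Var) :
    Function.update a x (a x + 1) y + n ≤ b y := by
  have := h y
  by_cases hy : y = x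
  · subst hy; simp; omega
  · simp [hy]; omega

/-- Replaying an SCM run: writes use the free timestamps above `a`, and RMWs (which must write
right above the view) are possible as long as `T = a`. -/
theorem Simulates.replay {σ : List (MemEv Proc Var Val)} {m' : Var → Val} (hσ : SCMRun m σ m')
    (h : s.Simulates P m T a b) (hP : ∀ e ∈ σ, e.proc ∈ P) (hroom : ∀ x, a x + σ.length ≤ b x)
    (hRMW : T = a ∨ ∀ e ∈ σ, ¬ e.isRMW) (hF : s.fview ≤ T ∨ ∀ e ∈ σ, ¬ e.isFence) :
    ∃ s' T' a', ObsPath (RAStep Proc Var Val) s σ s' ∧ s'.Simulates P m' T' a' b ∧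
      s.Extends P a b s' ∧ (T = a → T' = a') ∧ (s.fview ≤ T → s'.fview ≤ T') ∧
      ((∀ e ∈ σ, ¬ e.isFence) → s'.fview = s.fview) := by
  induction hσ generalizing s T a with
  | nil => exact ⟨s, T, a, .nil s, h, .refl, id, id, fun _ => rfl⟩
  | tau hst => cases hst
  | @obs m _ m' e σ hst hrest ih =>
    simp only [List.mem_cons, forall_eq_or_imp, List.length_cons] at hP hroom hRMW hF ⊢
    have hroom' : ∀ x, a x < b x := fun x => by have := hroom x; omega
    have haa : ∀ x, a ≤ Function.update a x (a x + 1) := fun x =>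
      le_update_self_iff.mpr (Nat.le_succ _)
    cases hst with
    | write p x v =>
      obtain ⟨hs1, hext1⟩ := h.addMsg hP.1 (hroom' x) v
      have hstep := RAStep.write s p x v (a x + 1)
        (Nat.lt_succ_of_le ((h.view_le p hP.1 x).trans (h.le x))) (h.fresh (hroom' x))
      have hTT : T ≤ Function.update T x (a x + 1) :=
        le_update_self_iff.mpr ((h.le x).trans (Nat.le_succ _))
      obtain ⟨s', T', a', e', hs', hext', hTa, hfv, hnf⟩ := ih hs1 hP.2
        (update_succ_add_le hroom x) (hRMW.imp (fun h => by rw [h]) (·.2))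
        (hF.imp (fun h => h.trans hTT) (·.2))
      exact ⟨s', T', a', .obs hstep e', hs', hext1.trans hext' (haa x),
        fun h => hTa (by rw [h]), fun h => hfv (h.trans hTT), fun h => hnf h.2⟩
    | read p x =>
      obtain ⟨s1, e1, hs1, hvx, hfv1, hext1⟩ := h.catchUp hP.1 x
      obtain ⟨V, -, -, hμ⟩ := hs1.msg x
      obtain ⟨s', T', a', e', hs', hext', hTa, hfv, hnf⟩ :=
        ih hs1 hP.2 (fun y => by have := hroom y; omega) (hRMW.imp id (·.2))
          (hfv1 ▸ hF.imp id (·.2))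
      exact ⟨s', T', a', e1.append (.obs (RAStep.read s1 p x (m x) V (hvx ▸ hμ)) e'), hs',
        hext1.trans hext' le_rfl, hTa, fun h => hfv (hfv1 ▸ h), fun h => (hnf h.2).trans hfv1⟩
    | rmw p x vnew =>
      obtain rfl : T = a := hRMW.resolve_right fun h => h.1 ⟨x, _, _, rfl⟩
      obtain ⟨s1, e1, hs1, hvx, hfv1, hext1⟩ := h.catchUp hP.1 x
      obtain ⟨V, -, -, hμ⟩ := hs1.msg x
      have hstep := RAStep.rmw s1 p x (m x) vnew V (hvx ▸ hμ) (hvx ▸ hs1.fresh (hroom' x))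
      rw [hvx] at hstep
      obtain ⟨hs2, hext2⟩ := hs1.addMsg hP.1 (hroom' x) vnew
      obtain ⟨s', T', a', e', hs', hext', hTa, hfv, hnf⟩ := ih hs2 hP.2
        (update_succ_add_le hroom x) (.inl rfl) (hF.imp (fun h => hfv1 ▸ h.trans (haa x)) (·.2))
      exact ⟨s', T', a', e1.append (.obs hstep e'), hs',
        hext1.trans (hext2.trans hext' (haa x)) le_rfl, fun _ => hTa rfl,
        fun h => hfv (hfv1 ▸ h.trans (haa x)), fun h => (hnf h.2).trans hfv1⟩
    | fence p =>
      have hfT : s.fview ≤ T := hF.resolve_right fun h => h.1 rfl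
      have hjoin : viewJoin (s.view p) s.fview ≤ T := fun y =>
        max_le (h.view_le p hP.1 y) (hfT y)
      let s1 : RAState Proc Var Val :=
        ⟨s.mem, Function.update s.view p (viewJoin (s.view p) s.fview), viewJoin (s.view p) s.fview⟩
      have hs1 : s1.Simulates P m T a b := by
        refine ⟨fun q hq => ?_, h.msg, h.le, h.gap⟩
        by_cases hqp : q = p
        · subst hqp; simpa [s1] using hjoin
        · simpa [s1, hqp] using h.view_le q hq
      have hext1 : s.Extends P a b s1 :=
        ⟨fun q hq => by simp [s1, show q ≠ p from fun h => hq (h ▸ hP.1)], subset_rfl,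
          fun _ h => .inl h⟩
      obtain ⟨s', T', a', e', hs', hext', hTa, hfv, -⟩ :=
        ih hs1 hP.2 (fun y => by have := hroom y; omega) (hRMW.imp id (·.2)) (.inl hjoin)
      exact ⟨s', T', a', .obs (RAStep.fence s p) e', hs', hext1.trans hext' le_rfl, hTa,
        fun _ => hfv hjoin, fun h => absurd rfl h.1⟩

theorem exists_flat_of_scmRun [Zero Val] {σ : List (MemEv Proc Var Val)} {m : Var → Val}
    (h : SCMRun (fun _ => 0) σ m) :
    ∃ s T, ObsPath (RAStep Proc Var Val) (RAModel Proc Var Val).init σ s ∧ s.Flat m T := by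
  have hinit : (RAModel Proc Var Val).init.Simulates Set.univ (fun _ => 0) 0 0
      (fun _ => σ.length) :=
    ⟨fun _ _ => le_rfl, fun x => ⟨0, le_rfl, rfl, ⟨x, rfl⟩⟩, le_rfl,
      fun μ ⟨x, hμ⟩ => .inl (by simp [hμ])⟩
  obtain ⟨s, T, a, e, hs, hext, hTa, hfv, -⟩ :=
    hinit.replay h (fun _ _ => trivial) (fun _ => by simp) (.inl rfl) (.inl le_rfl)
  obtain rfl := hTa rfl
  refine ⟨s, T, e, fun q => hs.view_le q trivial, hfv le_rfl, hs.msg, fun μ hμ => ?_⟩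
  rcases hext.mem_new μ hμ with ⟨x, rfl⟩ | ⟨-, hle⟩
  · simp
  · exact (hs.gap μ hμ).resolve_right (by simpa using hle)

end RAState

variable [DecidableEq Proc] [DecidableEq Var]

theorem exists_obsPath_ra_of_forall_isFence {σ : List (MemEv Proc Var Val)}
    (hσ : ∀ e ∈ σ, e.isFence) (s : RAState Proc Var Val) :
    ∃ s', ObsPath (RAStep Proc Var Val) s σ s' := by
  induction σ generalizing s with
  | nil => exact ⟨s, .nil s⟩
  | cons e σ ih =>
    simp only [List.mem_cons, forall_eq_or_imp] at hσ
    obtain ⟨p, act⟩ := e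
    obtain rfl : act = .fence := hσ.1
    obtain ⟨s', hs'⟩ := ih hσ.2 _
    exact ⟨s', .obs (RAStep.fence s p) hs'⟩

variable [Zero Val] {σ0 σ1 σ2 : List (MemEv Proc Var Val)} {p1 p2 : Proc}

theorem SoloRuns.mem_OTraces_ra_of_isRW (h : SoloRuns σ0 σ1 σ2 p1 p2) (hRW : IsRW σ2) :
    σ0 ++ σ2 ++ σ1 ∈ (RAModel Proc Var Val).OTraces (RAModel Proc Var Val).init := by
  obtain ⟨m0, h0, ⟨m1, h1⟩, ⟨m2, h2⟩⟩ := h.runs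
  obtain ⟨s0, T0, e0, hs0⟩ := RAState.exists_flat_of_scmRun h0
  let a : Var → ℕ := fun x => T0 x + σ1.length
  obtain ⟨s2, -, -, e2, -, hext2, -, -, hfv2⟩ :=
    (hs0.simulates (P := {p2}) (b := fun x => a x + σ2.length) fun x => Nat.le_add_right _ _).replay
      h2 (by simpa using h.proc₂) (fun _ => le_rfl) (.inr fun e he => (isRW_iff.mp hRW e he).1)
      (.inr fun e he => (isRW_iff.mp hRW e he).2)
  obtain ⟨s1, -, -, e1, -⟩ :=
    (hs0.simulates_of_extends hext2 (by simpa using h.ne) le_rfl (.inr le_rfl)).replay h1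
      (by simpa using h.proc₁) (fun _ => le_rfl) (.inl rfl)
      (.inl (hfv2 (fun e he => (isRW_iff.mp hRW e he).2) ▸ hs0.fview_le))
  exact MemModel.mem_OTraces_iff.mpr ⟨_, (e0.append e2).append e1⟩

/-- The trailing fences of `p1` follow all its reads, so the views they join in do not matter. -/
theorem SoloRuns.mem_OTraces_ra_of_isTF (h : SoloRuns σ0 σ1 σ2 p1 p2)
    (hRMW : ∀ e ∈ σ1, ¬ e.isRMW) (hTF : IsTF σ1) :
    σ0 ++ σ2 ++ σ1 ∈ (RAModel Proc Var Val).OTraces (RAModel Proc Var Val).init := by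
  obtain ⟨m0, h0, ⟨m1, h1⟩, ⟨m2, h2⟩⟩ := h.runs
  obtain ⟨w, f, rfl, hw, hf⟩ := hTF.exists_eq_append hRMW
  obtain ⟨mw, h1w, -⟩ := h1.split
  obtain ⟨s0, T0, e0, hs0⟩ := RAState.exists_flat_of_scmRun h0
  let a : Var → ℕ := fun x => T0 x + σ2.length
  obtain ⟨s2, -, -, e2, -, hext2, -⟩ :=
    (hs0.simulates (P := {p2}) (b := a) le_rfl).replay h2 (by simpa using h.proc₂)
      (fun _ => le_rfl) (.inl rfl) (.inl hs0.fview_le)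
  obtain ⟨s1, -, -, e1, -⟩ :=
    (hs0.simulates_of_extends hext2 (b := fun x => a x + w.length) (by simpa using h.ne)
      (fun x => Nat.le_add_right _ _) (.inl le_rfl)).replay h1w
      (fun e he => by simpa using h.proc₁ e (List.mem_append_left _ he)) (fun _ => le_rfl)
      (.inr fun e he => (isRW_iff.mp hw e he).1) (.inr fun e he => (isRW_iff.mp hw e he).2)
  obtain ⟨s3, e3⟩ := exists_obsPath_ra_of_forall_isFence hf s1
  exact MemModel.mem_OTraces_iff.mpr ⟨_, (e0.append e2).append (e1.append e3)⟩

end RA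

theorem one_sided_lower_general (Proc Var Val Op Ret : Type) [DecidableEq Proc]
    [DecidableEq Var] [Zero Val]
    (Spec : Set (List (ObjEv Proc Op Ret))) (hSpec : IsSpec Spec)
    (hdet : Deterministic Spec)
    (o1 o2 : Op) (hnc : OneSidedNonComm Spec o1 o2)
    (I : Impl Proc Var Val Op Ret) (hav : SpecAvailable I Spec) :
    (Consistent I (TSOModel Proc Var Val) Spec →
      ∃ (p1 p2 : Proc) (π1 π2 : List (Ev Proc Var Val Op Ret)),
        π1 ∈ (I o1 p1).traces ∧ π2 ∈ (I o2 p2).traces ∧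
        ((∃ e ∈ restrictMem π1, MemEv.isFence e ∨ MemEv.isRMW e) ∨
         (∃ e ∈ restrictMem π2, MemEv.isFence e ∨ MemEv.isRMW e))) ∧
    (Consistent I (RAModel Proc Var Val) Spec →
      ∃ (p1 p2 : Proc) (π1 π2 : List (Ev Proc Var Val Op Ret)),
        π1 ∈ (I o1 p1).traces ∧ π2 ∈ (I o2 p2).traces ∧
        ¬ IsRW (restrictMem π1) ∧ ¬ IsRW (restrictMem π2) ∧
        ((∃ e ∈ restrictMem π1, MemEv.isRMW e) ∨
         (∃ e ∈ restrictMem π2, MemEv.isRMW e) ∨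
         ¬ IsLTF (restrictMem π1) ∨ ¬ IsLTF (restrictMem π2) ∨
         (IsLF (restrictMem π1) ∧ IsTF (restrictMem π2)) ∨
         (IsTF (restrictMem π1) ∧ IsLF (restrictMem π2)))) := by
  obtain ⟨R⟩ := Race.nonempty (Var := Var) (Val := Val) hSpec hdet hnc hav
  refine ⟨fun hcons => ?_, fun hcons => ?_⟩
  · have h2 : ¬ IsRW (restrictMem R.ρ2) := fun h =>
      R.not_mem_OTraces _ hcons (R.soloRuns.mem_OTraces_tso h)
    exact ⟨R.p1, R.p2, R.ρ1, R.ρ2, R.mem_traces₁, R.mem_traces₂,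
      .inr (exists_isFence_or_isRMW_of_not_isRW h2)⟩
  · have h2 : ¬ IsRW (restrictMem R.ρ2) := fun h =>
      R.not_mem_OTraces _ hcons (R.soloRuns.mem_OTraces_ra_of_isRW h)
    have h1 : ¬ ((∀ e ∈ restrictMem R.ρ1, ¬ e.isRMW) ∧ IsTF (restrictMem R.ρ1)) := fun h =>
      R.not_mem_OTraces _ hcons (R.soloRuns.mem_OTraces_ra_of_isTF h.1 h.2)
    obtain ⟨τ1, τ2, hτ1, hτ2, hpat⟩ := exists_prefix_raLowerBound h1 h2
    obtain ⟨π1, hπ1, rfl⟩ := OpImpl.exists_mem_traces_restrictMem_eq R.mem_traces₁ hτ1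
    obtain ⟨π2, hπ2, rfl⟩ := OpImpl.exists_mem_traces_restrictMem_eq R.mem_traces₂ hτ2
    exact ⟨R.p1, R.p2, π1, π2, hπ1, hπ2, hpat⟩

/-- lower bounds for implementations of objects with a one-sided
non-commutative pair of operations, under TSO and under RA. -/
theorem one_sided_lower (Proc Var Val Op Ret : Type) [Fintype Proc] [DecidableEq Proc]
    [DecidableEq Var] [Zero Val]
    (Spec : Set (List (ObjEv Proc Op Ret))) (hSpec : IsSpec Spec)
    (hdet : Deterministic Spec)
    (o1 o2 : Op) (hnc : OneSidedNonComm Spec o1 o2)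
    (I : Impl Proc Var Val Op Ret) (hav : SpecAvailable I Spec) :
    (Consistent I (TSOModel Proc Var Val) Spec →
      ∃ (p1 p2 : Proc) (π1 π2 : List (Ev Proc Var Val Op Ret)),
        π1 ∈ (I o1 p1).traces ∧ π2 ∈ (I o2 p2).traces ∧
        ((∃ e ∈ restrictMem π1, MemEv.isFence e ∨ MemEv.isRMW e) ∨
         (∃ e ∈ restrictMem π2, MemEv.isFence e ∨ MemEv.isRMW e))) ∧
    (Consistent I (RAModel Proc Var Val) Spec →
      ∃ (p1 p2 : Proc) (π1 π2 : List (Ev Proc Var Val Op Ret)),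
        π1 ∈ (I o1 p1).traces ∧ π2 ∈ (I o2 p2).traces ∧
        ¬ IsRW (restrictMem π1) ∧ ¬ IsRW (restrictMem π2) ∧
        ((∃ e ∈ restrictMem π1, MemEv.isRMW e) ∨
         (∃ e ∈ restrictMem π2, MemEv.isRMW e) ∨
         ¬ IsLTF (restrictMem π1) ∨ ¬ IsLTF (restrictMem π2) ∨
         (IsLF (restrictMem π1) ∧ IsTF (restrictMem π2)) ∨
         (IsTF (restrictMem π1) ∧ IsLF (restrictMem π2)))) :=
  one_sided_lower_general Proc Var Val Op Ret Spec hSpec hdet o1 o2 hnc I hav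

end WMM
end

section
/- Let O be a deterministic object and let o1, o2 ∈ ops(O) be two-sided non-commutative operations in spec(O). Then there exist a complete sequential history h0, processes p1 ≠ p2, and response values u1, u2 ∈ rets(O) such that the histories ⟨p1: o1 ⇒ u1⟩ and ⟨p2: o2 ⇒ u2⟩ are not weakly mergeable in spec(O) after h0. -/
set_option autoImplicit false

namespace WMM

universe u v

/-! ### Auxiliary lemmas for Statement 16 -/

section Aux16

variable {Proc Op Ret : Type}

lemma reorder_refl {α : Type u} (R : α → α → Prop) (s : List α) : Reorder R s s :=
  ⟨Equiv.refl _, fun _ => rfl, fun _ _ hij _ => hij⟩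

lemma getElem?_cons_cons {α : Type u} (a b : α) (l : List α) (n : ℕ) :
    (a :: b :: l)[n+2]? = l[n]? := by
  simp [List.getElem?_cons_succ]

lemma completeSeq_append_invres {h : List (ObjEv Proc Op Ret)} (hcs : CompleteSeq h)
    (p : Proc) (o : Op) (u : Ret) : CompleteSeq (h ++ invres p o u) := by
  induction hcs with
  | nil => exact CompleteSeq.cons p o u CompleteSeq.nil
  | cons q o' u' hcs' ih => exact CompleteSeq.cons q o' u' ih

lemma completeSeq_of_append {h0 : List (ObjEv Proc Op Ret)} (h0cs : CompleteSeq h0) :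
    ∀ t : List (ObjEv Proc Op Ret), CompleteSeq (h0 ++ t) → CompleteSeq t := by
  induction h0cs with
  | nil => exact fun t ht => ht
  | cons p o u hcs' ih =>
    intro t hcs
    rw [List.cons_append, List.cons_append] at hcs
    cases hcs with
    | cons _ _ _ h2 => exact ih t h2

lemma completeSeq_head_inv {h : List (ObjEv Proc Op Ret)} (hcs : CompleteSeq h)
    {e : ObjEv Proc Op Ret} (he : h[0]? = some e) : e.act.isInv := by
  cases hcs with
  | nil => simp at he
  | cons p o u hcs' =>
    simp at he
    rw [← he]
    trivial

lemma completeSeq_parity {h : List (ObjEv Proc Op Ret)} (hcs : CompleteSeq h) :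
    h.length % 2 = 0 ∧
      ∀ (k : ℕ) (e : ObjEv Proc Op Ret), h[k]? = some e → k % 2 = 1 → e.act.isRes := by
  induction hcs with
  | nil =>
    refine ⟨rfl, ?_⟩
    intro k e he _
    simp at he
  | cons p o u hcs' ih =>
    refine ⟨by have h1 := ih.1; simp only [List.length_cons]; omega, ?_⟩
    intro k e he hk
    match k, hk with
    | 0, hk => omega
    | 1, _ =>
      simp at he
      rw [← he]
      trivial
    | (n+2), hk =>
      rw [getElem?_cons_cons] at he
      exact ih.2 n e he (by omega)

lemma completeSeq_chain {h : List (ObjEv Proc Op Ret)} (hcs : CompleteSeq h) :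
    ∀ (k : ℕ) (e e' : ObjEv Proc Op Ret), h[k]? = some e → h[k+1]? = some e' →
      linRel e e' := by
  induction hcs with
  | nil => intro k e e' he _; simp at he
  | cons p o u hcs' ih =>
    intro k e e' he he'
    match k with
    | 0 =>
      simp at he he'
      rw [← he, ← he']
      exact Or.inl rfl
    | 1 =>
      simp at he he'
      rw [← he]
      exact Or.inr ⟨trivial, completeSeq_head_inv hcs' he'⟩
    | (n+2) =>
      rw [show n+2+1 = n+1+2 from by omega] at he'
      rw [getElem?_cons_cons] at he he'
      exact ih n e e' he he'

lemma completeSeq_four {t : List (ObjEv Proc Op Ret)} (hcs : CompleteSeq t)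
    (hlen : t.length = 4) :
    ∃ (q q' : Proc) (a a' : Op) (b b' : Ret),
      t = [⟨q, ObjAct.inv a⟩, ⟨q, ObjAct.res b⟩, ⟨q', ObjAct.inv a'⟩, ⟨q', ObjAct.res b'⟩] := by
  cases hcs with
  | nil => simp at hlen
  | cons q a b hcs2 =>
    cases hcs2 with
    | nil => simp at hlen
    | cons q' a' b' hcs3 =>
      cases hcs3 with
      | nil => exact ⟨q, q', a, a', b, b', rfl⟩
      | cons _ _ _ _ => simp only [List.length_cons] at hlen; omega


/-- A cons-based variant of `Shuffle`. -/
inductive Shuf {α : Type u} : List α → List α → List α → Prop where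
  | nil : Shuf [] [] []
  | left {s1 s2 s : List α} (x : α) : Shuf s1 s2 s → Shuf (x :: s1) s2 (x :: s)
  | right {s1 s2 s : List α} (x : α) : Shuf s1 s2 s → Shuf s1 (x :: s2) (x :: s)

lemma shuffle_to_shuf {α : Type u} {s1 s2 s : List α} (h : Shuffle s1 s2 s) :
    Shuf s1.reverse s2.reverse s.reverse := by
  induction h with
  | nil => exact Shuf.nil
  | left x h ih => simpa using Shuf.left x ih
  | right x h ih => simpa using Shuf.right x ih

lemma shuffle_pair {α : Type u} {a b c d : α} {s : List α} (hs : Shuffle [a,b] [c,d] s) :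
    s = [a,b,c,d] ∨ s = [a,c,b,d] ∨ s = [a,c,d,b] ∨ s = [c,a,b,d] ∨ s = [c,a,d,b] ∨
      s = [c,d,a,b] := by
  have h' := shuffle_to_shuf hs
  simp only [List.reverse_cons, List.reverse_nil, List.nil_append, List.cons_append,
    List.append_nil] at h'
  generalize hr : s.reverse = r at h'
  have hs' : s = r.reverse := by rw [← hr, List.reverse_reverse]
  subst hs'
  cases h' with
  | left x h1 =>
    cases h1 with
    | left y h2 =>
      cases h2 with
      | right z h3 =>
        cases h3 with
        | right w h4 => cases h4; simp
    | right y h2 =>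
      cases h2 with
      | left z h3 =>
        cases h3 with
        | right w h4 => cases h4; simp
      | right z h3 =>
        cases h3 with
        | left w h4 => cases h4; simp
  | right x h1 =>
    cases h1 with
    | left y h2 =>
      cases h2 with
      | left z h3 =>
        cases h3 with
        | right w h4 => cases h4; simp
      | right z h3 =>
        cases h3 with
        | left w h4 => cases h4; simp
    | right y h2 =>
      cases h2 with
      | left z h3 =>
        cases h3 with
        | left w h4 => cases h4; simp

/-- Core lemma: a linearization of `h0 ++ h`, where `h` interleaves the four events of two
single-operation histories of distinct processes, must be `h0` followed by the two operations
in one of the two sequential orders. -/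
lemma reorder_core (Spec : Set (List (ObjEv Proc Op Ret))) (hSpec : IsSpec Spec)
    {h0 : List (ObjEv Proc Op Ret)} {p1 p2 : Proc} {o1 o2 : Op} {u1 u2 : Ret}
    (hcs0 : CompleteSeq h0) (hp : p1 ≠ p2)
    {h h' : List (ObjEv Proc Op Ret)} (i1 i2 i3 i4 : ℕ)
    (hmem : h' ∈ Spec)
    (hre : Reorder linRel (h0 ++ h) h')
    (hlen : h.length = 4)
    (h12 : i1 < i2) (h34 : i3 < i4) (hi2 : i2 < 4) (hi4 : i4 < 4)
    (cover : ∀ k, k < 4 → k = i1 ∨ k = i2 ∨ k = i3 ∨ k = i4)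
    (g1 : h[i1]? = some ⟨p1, ObjAct.inv o1⟩)
    (g2 : h[i2]? = some ⟨p1, ObjAct.res u1⟩)
    (g3 : h[i3]? = some ⟨p2, ObjAct.inv o2⟩)
    (g4 : h[i4]? = some ⟨p2, ObjAct.res u2⟩) :
    h' = h0 ++ invres p1 o1 u1 ++ invres p2 o2 u2 ∨
      h' = h0 ++ invres p2 o2 u2 ++ invres p1 o1 u1 := by
  obtain ⟨f, hget, hmono⟩ := hre
  have hi1 : i1 < 4 := lt_trans h12 hi2
  have hi3 : i3 < 4 := lt_trans h34 hi4
  have hcard : (h0 ++ h).length = h'.length := by simpa using Fintype.card_congr f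
  set m := h0.length with hm
  have hsl : (h0 ++ h).length = m + 4 := by rw [List.length_append, hlen, ← hm]
  have hlen' : h'.length = m + 4 := by omega
  set F : ℕ → ℕ := fun i => if hi : i < (h0 ++ h).length then (f ⟨i, hi⟩ : ℕ) else 0 with hF
  have hFlt : ∀ i, i < m + 4 → F i < m + 4 := by
    intro i hi
    have hi' : i < (h0 ++ h).length := by omega
    simp only [hF, dif_pos hi']
    have := (f ⟨i, hi'⟩).isLt
    omega
  have hgetF : ∀ i, i < m + 4 → h'[F i]? = (h0 ++ h)[i]? := by
    intro i hi
    have hi' : i < (h0 ++ h).length := by omega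
    simp only [hF, dif_pos hi']
    have h1 := hget ⟨i, hi'⟩
    rw [List.get_eq_getElem, List.get_eq_getElem] at h1
    rw [List.getElem?_eq_getElem (f ⟨i, hi'⟩).isLt, List.getElem?_eq_getElem hi', h1]
  have hmonoF : ∀ (i j : ℕ) (e e' : ObjEv Proc Op Ret), i < j → j < m + 4 →
      (h0 ++ h)[i]? = some e → (h0 ++ h)[j]? = some e' → linRel e e' → F i < F j := by
    intro i j e e' hij hj he he' hrel
    have hj' : j < (h0 ++ h).length := by omega
    have hi' : i < (h0 ++ h).length := by omega
    simp only [hF, dif_pos hi', dif_pos hj']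
    have hrel' : linRel ((h0 ++ h).get ⟨i, hi'⟩) ((h0 ++ h).get ⟨j, hj'⟩) := by
      rw [List.get_eq_getElem, List.get_eq_getElem]
      rw [List.getElem?_eq_getElem hi'] at he
      rw [List.getElem?_eq_getElem hj'] at he'
      rw [Option.some.inj he, Option.some.inj he']
      exact hrel
    exact Fin.lt_def.mp (hmono ⟨i, hi'⟩ ⟨j, hj'⟩ (Fin.mk_lt_mk.mpr hij) hrel')
  have hFinj : ∀ i j, i < m + 4 → j < m + 4 → F i = F j → i = j := by
    intro i j hi hj hFeq
    have hi' : i < (h0 ++ h).length := by omega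
    have hj' : j < (h0 ++ h).length := by omega
    simp only [hF, dif_pos hi', dif_pos hj'] at hFeq
    exact congrArg Fin.val (f.injective (Fin.val_injective hFeq))
  have hFsurj : ∀ v, v < m + 4 → ∃ i, i < m + 4 ∧ F i = v := by
    intro v hv
    have hv' : v < h'.length := by omega
    refine ⟨(f.symm ⟨v, hv'⟩ : ℕ), by have := (f.symm ⟨v, hv'⟩).isLt; omega, ?_⟩
    have hk' : ((f.symm ⟨v, hv'⟩ : Fin (h0 ++ h).length) : ℕ) < (h0 ++ h).length :=
      (f.symm ⟨v, hv'⟩).isLt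
    simp only [hF, dif_pos hk']
    rw [Fin.eta, Equiv.apply_symm_apply]
  have hleft : ∀ (k : ℕ), k < m → (h0 ++ h)[k]? = h0[k]? := by
    intro k hk
    exact List.getElem?_append_left (by omega)
  have hright : ∀ (k : ℕ), (h0 ++ h)[m + k]? = h[k]? := by
    intro k
    rw [List.getElem?_append_right (by omega : h0.length ≤ m + k)]
    congr 1
    omega
  obtain ⟨hpar, hres⟩ := completeSeq_parity hcs0
  have hchain := completeSeq_chain hcs0
  have step : ∀ k, k + 1 < m → F k < F (k + 1) := by
    intro k hk
    have hk0 : k < h0.length := by omega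
    have hk1 : k + 1 < h0.length := by omega
    refine hmonoF k (k + 1) (h0[k]'hk0) (h0[k+1]'hk1) (by omega) (by omega) ?_ ?_ ?_
    · rw [hleft k (by omega)]; exact List.getElem?_eq_getElem hk0
    · rw [hleft (k+1) (by omega)]; exact List.getElem?_eq_getElem hk1
    · exact hchain k _ _ (List.getElem?_eq_getElem hk0) (List.getElem?_eq_getElem hk1)
  have mono0 : ∀ (j : ℕ), j < m → ∀ i, i ≤ j → F i ≤ F j := by
    intro j
    induction j with
    | zero =>
      intro _ i hij
      have : i = 0 := by omega
      rw [this]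
    | succ j ihj =>
      intro hj i hij
      rcases Nat.lt_or_ge i (j + 1) with hlt | hge
      · have h1 := ihj (by omega) i (by omega)
        have h2 := step j hj
        omega
      · have : i = j + 1 := by omega
        rw [this]
  have mono0' : ∀ j, j < m → ∀ i, i < j → F i < F j := by
    intro j hj i hij
    have h1 := mono0 (j - 1) (by omega) i (by omega)
    have h2 := step (j - 1) (by omega)
    have h3 : j - 1 + 1 = j := by omega
    rw [h3] at h2
    omega
  have key_inv : ∀ (k : ℕ), k < 4 →
      (h[k]? = some (⟨p1, ObjAct.inv o1⟩ : ObjEv Proc Op Ret) ∨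
        h[k]? = some (⟨p2, ObjAct.inv o2⟩ : ObjEv Proc Op Ret)) →
      ∀ i, i < m → F i < F (m + k) := by
    intro k hk4 hkinv i him
    have hm0 : 0 < m := by omega
    have hm1 : m - 1 < h0.length := by omega
    have hlv : (h0 ++ h)[m - 1]? = some (h0[m - 1]'hm1) := by
      rw [hleft (m - 1) (by omega)]; exact List.getElem?_eq_getElem hm1
    have hresv : (h0[m - 1]'hm1).act.isRes :=
      hres (m - 1) _ (List.getElem?_eq_getElem hm1) (by omega)
    have hstep : F (m - 1) < F (m + k) := by
      rcases hkinv with hv | hv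
      · exact hmonoF (m - 1) (m + k) _ _ (by omega) (by omega) hlv ((hright k).trans hv)
          (Or.inr ⟨hresv, trivial⟩)
      · exact hmonoF (m - 1) (m + k) _ _ (by omega) (by omega) hlv ((hright k).trans hv)
          (Or.inr ⟨hresv, trivial⟩)
    have hle : F i ≤ F (m - 1) := mono0 (m - 1) (by omega) i (by omega)
    omega
  have key : ∀ j, m ≤ j → j < m + 4 → ∀ i, i < m → F i < F j := by
    intro j hmj hj i him
    rcases cover (j - m) (by omega) with hc | hc | hc | hc
    · have hje : j = m + i1 := by omega
      rw [hje]; exact key_inv i1 hi1 (Or.inl g1) i him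
    · have hje : j = m + i2 := by omega
      rw [hje]
      have h1 := key_inv i1 hi1 (Or.inl g1) i him
      have h2 : F (m + i1) < F (m + i2) :=
        hmonoF _ _ _ _ (by omega) (by omega) ((hright i1).trans g1) ((hright i2).trans g2)
          (Or.inl rfl)
      omega
    · have hje : j = m + i3 := by omega
      rw [hje]; exact key_inv i3 hi3 (Or.inr g3) i him
    · have hje : j = m + i4 := by omega
      rw [hje]
      have h1 := key_inv i3 hi3 (Or.inr g3) i him
      have h2 : F (m + i3) < F (m + i4) :=
        hmonoF _ _ _ _ (by omega) (by omega) ((hright i3).trans g3) ((hright i4).trans g4)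
          (Or.inl rfl)
      omega
  have Fge : ∀ i, i < m → i ≤ F i := by
    intro i
    induction i with
    | zero => intro _; exact Nat.zero_le _
    | succ i ih =>
      intro him
      have h1 := ih (by omega)
      have h2 := step i (by omega)
      omega
  have Fid : ∀ i, i < m → F i = i := by
    intro i
    induction i using Nat.strong_induction_on with
    | _ i IH =>
      intro him
      obtain ⟨k, hk, hFk⟩ := hFsurj i (by omega)
      rcases lt_trichotomy k i with hlt | heq | hgt
      · have := IH k hlt (by omega)
        omega
      · rw [← heq]; omega
      · rcases Nat.lt_or_ge k m with hkm | hkm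
        · have h1 := mono0' k hkm i hgt
          have h2 := Fge i him
          omega
        · have h1 := key k hkm hk i him
          have h2 := Fge i him
          omega
  have Fgem : ∀ j, m ≤ j → j < m + 4 → m ≤ F j := by
    intro j hmj hj
    by_contra hcon
    push_neg at hcon
    have h1 := Fid (F j) hcon
    have h2 := hFinj (F j) j (by omega) (by omega) h1
    omega
  have htake : h'.take m = h0 := by
    apply List.ext_getElem
    · rw [List.length_take]; omega
    · intro i hi1 hi2
      have him : i < m := by rw [List.length_take] at hi1; omega
      rw [List.getElem_take]
      have e1 := hgetF i (by omega)
      rw [Fid i him] at e1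
      have e3 : h'[i]? = h0[i]? := e1.trans (hleft i him)
      rw [List.getElem?_eq_getElem (by omega : i < h'.length),
        List.getElem?_eq_getElem hi2] at e3
      exact Option.some.inj e3
  have hsplit : h' = h0 ++ h'.drop m := by
    conv_lhs => rw [← List.take_append_drop m h']
    rw [htake]
  have hcs' : CompleteSeq h' := hSpec.1 h' hmem
  have hcst : CompleteSeq (h'.drop m) :=
    completeSeq_of_append hcs0 (h'.drop m) (hsplit ▸ hcs')
  have hlent : (h'.drop m).length = 4 := by rw [List.length_drop]; omega
  obtain ⟨q, q', aa, aa', bb, bb', hteq⟩ := completeSeq_four hcst hlent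
  have hT : ∀ k, k < 4 → (h'.drop m)[F (m + k) - m]? = h[k]? := by
    intro k hk
    have h1 := hgetF (m + k) (by omega)
    have h3 : m ≤ F (m + k) := Fgem (m + k) (by omega) (by omega)
    rw [List.getElem?_drop]
    rw [show m + (F (m + k) - m) = F (m + k) by omega]
    exact h1.trans (hright k)
  have L0 : ∀ (x0 x1 x2 x3 : ObjEv Proc Op Ret), ([x0,x1,x2,x3] : List _)[0]? = some x0 :=
    fun _ _ _ _ => rfl
  have L1 : ∀ (x0 x1 x2 x3 : ObjEv Proc Op Ret), ([x0,x1,x2,x3] : List _)[1]? = some x1 :=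
    fun _ _ _ _ => rfl
  have L2 : ∀ (x0 x1 x2 x3 : ObjEv Proc Op Ret), ([x0,x1,x2,x3] : List _)[2]? = some x2 :=
    fun _ _ _ _ => rfl
  have L3 : ∀ (x0 x1 x2 x3 : ObjEv Proc Op Ret), ([x0,x1,x2,x3] : List _)[3]? = some x3 :=
    fun _ _ _ _ => rfl
  have t1 := (hT i1 hi1).trans g1
  have t2 := (hT i2 hi2).trans g2
  have t3 := (hT i3 hi3).trans g3
  have t4 := (hT i4 hi4).trans g4
  rw [hteq] at t1 t2 t3 t4
  have hb1 : F (m + i1) - m < 4 := by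
    have := hFlt (m + i1) (by omega); have := Fgem (m + i1) (by omega) (by omega); omega
  have hb2 : F (m + i2) - m < 4 := by
    have := hFlt (m + i2) (by omega); have := Fgem (m + i2) (by omega) (by omega); omega
  have hb3 : F (m + i3) - m < 4 := by
    have := hFlt (m + i3) (by omega); have := Fgem (m + i3) (by omega) (by omega); omega
  have hb4 : F (m + i4) - m < 4 := by
    have := hFlt (m + i4) (by omega); have := Fgem (m + i4) (by omega) (by omega); omega
  have hj12 : F (m + i1) < F (m + i2) :=
    hmonoF _ _ _ _ (by omega) (by omega) ((hright i1).trans g1) ((hright i2).trans g2)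
      (Or.inl rfl)
  have hj34 : F (m + i3) < F (m + i4) :=
    hmonoF _ _ _ _ (by omega) (by omega) ((hright i3).trans g3) ((hright i4).trans g4)
      (Or.inl rfl)
  have hgm1 : m ≤ F (m + i1) := Fgem (m + i1) (by omega) (by omega)
  have hgm2 : m ≤ F (m + i2) := Fgem (m + i2) (by omega) (by omega)
  have hgm3 : m ≤ F (m + i3) := Fgem (m + i3) (by omega) (by omega)
  have hgm4 : m ≤ F (m + i4) := Fgem (m + i4) (by omega) (by omega)
  have hj12' : F (m + i1) - m < F (m + i2) - m := by omega
  have hj34' : F (m + i3) - m < F (m + i4) - m := by omega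
  have hv1 : F (m + i1) - m = 0 ∨ F (m + i1) - m = 2 := by
    rcases (by omega : F (m + i1) - m = 0 ∨ F (m + i1) - m = 1 ∨ F (m + i1) - m = 2 ∨
        F (m + i1) - m = 3) with e | e | e | e
    · exact Or.inl e
    · rw [e, L1] at t1; simp at t1
    · exact Or.inr e
    · rw [e, L3] at t1; simp at t1
  have hv2 : F (m + i2) - m = 1 ∨ F (m + i2) - m = 3 := by
    rcases (by omega : F (m + i2) - m = 0 ∨ F (m + i2) - m = 1 ∨ F (m + i2) - m = 2 ∨
        F (m + i2) - m = 3) with e | e | e | e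
    · rw [e, L0] at t2; simp at t2
    · exact Or.inl e
    · rw [e, L2] at t2; simp at t2
    · exact Or.inr e
  have hv3 : F (m + i3) - m = 0 ∨ F (m + i3) - m = 2 := by
    rcases (by omega : F (m + i3) - m = 0 ∨ F (m + i3) - m = 1 ∨ F (m + i3) - m = 2 ∨
        F (m + i3) - m = 3) with e | e | e | e
    · exact Or.inl e
    · rw [e, L1] at t3; simp at t3
    · exact Or.inr e
    · rw [e, L3] at t3; simp at t3
  have hv4 : F (m + i4) - m = 1 ∨ F (m + i4) - m = 3 := by
    rcases (by omega : F (m + i4) - m = 0 ∨ F (m + i4) - m = 1 ∨ F (m + i4) - m = 2 ∨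
        F (m + i4) - m = 3) with e | e | e | e
    · rw [e, L0] at t4; simp at t4
    · exact Or.inl e
    · rw [e, L2] at t4; simp at t4
    · exact Or.inr e
  have hd13 : F (m + i1) - m ≠ F (m + i3) - m := by
    intro heq
    rw [heq] at t1
    have := t1.symm.trans t3
    simp at this
    exact hp this.1
  have hd24 : F (m + i2) - m ≠ F (m + i4) - m := by
    intro heq
    rw [heq] at t2
    have := t2.symm.trans t4
    simp at this
    exact hp this.1
  rcases hv1 with e1c | e1c
  · -- the operation of p1 is linearized first
    have e3c : F (m + i3) - m = 2 := by rcases hv3 with hh | hh <;> omega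
    have e4c : F (m + i4) - m = 3 := by rcases hv4 with hh | hh <;> omega
    have e2c : F (m + i2) - m = 1 := by rcases hv2 with hh | hh <;> omega
    rw [e1c, L0] at t1
    rw [e2c, L1] at t2
    rw [e3c, L2] at t3
    rw [e4c, L3] at t4
    simp only [Option.some.injEq, ObjEv.mk.injEq, ObjAct.inv.injEq, ObjAct.res.injEq]
      at t1 t2 t3 t4
    left
    rw [hsplit, hteq, t1.1, t1.2, t2.2, t3.1, t3.2, t4.2]
    simp [invres, List.append_assoc]
  · -- the operation of p2 is linearized first
    have e2c : F (m + i2) - m = 3 := by rcases hv2 with hh | hh <;> omega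
    have e3c : F (m + i3) - m = 0 := by rcases hv3 with hh | hh <;> omega
    have e4c : F (m + i4) - m = 1 := by rcases hv4 with hh | hh <;> omega
    rw [e1c, L2] at t1
    rw [e2c, L3] at t2
    rw [e3c, L0] at t3
    rw [e4c, L1] at t4
    simp only [Option.some.injEq, ObjEv.mk.injEq, ObjAct.inv.injEq, ObjAct.res.injEq]
      at t1 t2 t3 t4
    right
    rw [hsplit, hteq, t1.1, t1.2, t2.2, t3.1, t3.2, t4.2]
    simp [invres, List.append_assoc]

end Aux16

/-- for a deterministic object, a two-sided non-commutative pair of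
operations yields single-operation histories that are not weakly mergeable. -/
theorem two_sided_not_weakly_mergeable (Proc Op Ret : Type) [Fintype Proc]
    [DecidableEq Proc]
    (Spec : Set (List (ObjEv Proc Op Ret))) (hSpec : IsSpec Spec)
    (hdet : Deterministic Spec)
    (o1 o2 : Op) (hnc : TwoSidedNonComm Spec o1 o2) :
    ∃ (h0 : List (ObjEv Proc Op Ret)) (p1 p2 : Proc) (u1 u2 : Ret),
      CompleteSeq h0 ∧ p1 ≠ p2 ∧
      ¬ WeaklySpecMergeableAfter Spec h0 (invres p1 o1 u1) (invres p2 o2 u2) := by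
  obtain ⟨h0, p1, p2, u1, v1, u2, v2, hcs0, hp, hu1, hu2, hs1, hs2⟩ := hnc
  refine ⟨h0, p1, p2, u1, u2, hcs0, hp, ?_⟩
  intro hW
  have hcs01 : CompleteSeq (h0 ++ invres p1 o1 u1) := completeSeq_append_invres hcs0 _ _ _
  have hcs02 : CompleteSeq (h0 ++ invres p2 o2 u2) := completeSeq_append_invres hcs0 _ _ _
  have hin1 : h0 ++ invres p1 o1 u1 ∈ Spec :=
    hSpec.2 _ hs1 _ ⟨invres p2 o2 v2, rfl⟩ hcs01
  have hin2 : h0 ++ invres p2 o2 u2 ∈ Spec :=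
    hSpec.2 _ hs2 _ ⟨invres p1 o1 v1, rfl⟩ hcs02
  obtain ⟨h, hsh, h', hmem, hre⟩ :=
    hW ⟨_, hin1, reorder_refl _ _⟩ ⟨_, hin2, reorder_refl _ _⟩
  have hdisj : h' = h0 ++ invres p1 o1 u1 ++ invres p2 o2 u2 ∨
      h' = h0 ++ invres p2 o2 u2 ++ invres p1 o1 u1 := by
    rcases shuffle_pair hsh with rfl | rfl | rfl | rfl | rfl | rfl
    · exact reorder_core Spec hSpec hcs0 hp 0 1 2 3 hmem hre rfl (by omega) (by omega) (by omega)
        (by omega) (by intro k hk; omega) rfl rfl rfl rfl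
    · exact reorder_core Spec hSpec hcs0 hp 0 2 1 3 hmem hre rfl (by omega) (by omega) (by omega)
        (by omega) (by intro k hk; omega) rfl rfl rfl rfl
    · exact reorder_core Spec hSpec hcs0 hp 0 3 1 2 hmem hre rfl (by omega) (by omega) (by omega)
        (by omega) (by intro k hk; omega) rfl rfl rfl rfl
    · exact reorder_core Spec hSpec hcs0 hp 1 2 0 3 hmem hre rfl (by omega) (by omega) (by omega)
        (by omega) (by intro k hk; omega) rfl rfl rfl rfl
    · exact reorder_core Spec hSpec hcs0 hp 1 3 0 2 hmem hre rfl (by omega) (by omega) (by omega)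
        (by omega) (by intro k hk; omega) rfl rfl rfl rfl
    · exact reorder_core Spec hSpec hcs0 hp 2 3 0 1 hmem hre rfl (by omega) (by omega) (by omega)
        (by omega) (by intro k hk; omega) rfl rfl rfl rfl
  rcases hdisj with hA | hB
  · have hmemA : h0 ++ invres p1 o1 u1 ++ invres p2 o2 u2 ∈ Spec := hA ▸ hmem
    obtain ⟨e, he1, he2⟩ := hdet _ hmemA _ hs1 (h0 ++ invres p1 o1 u1) p2 o2
      ⟨[⟨p2, ObjAct.res u2⟩], by rw [List.append_assoc]; rfl⟩ ⟨[⟨p2, ObjAct.res v2⟩], by rw [List.append_assoc]; rfl⟩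
    have hx1 : [(⟨p2, ObjAct.inv o2⟩ : ObjEv Proc Op Ret), e] <+:
        [⟨p2, ObjAct.inv o2⟩, ⟨p2, ObjAct.res u2⟩] := by
      rwa [show h0 ++ invres p1 o1 u1 ++ invres p2 o2 u2 =
        (h0 ++ invres p1 o1 u1) ++ [⟨p2, ObjAct.inv o2⟩, ⟨p2, ObjAct.res u2⟩] from rfl,
        List.prefix_append_right_inj] at he1
    have hx2 : [(⟨p2, ObjAct.inv o2⟩ : ObjEv Proc Op Ret), e] <+:
        [⟨p2, ObjAct.inv o2⟩, ⟨p2, ObjAct.res v2⟩] := by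
      rwa [show h0 ++ invres p1 o1 u1 ++ invres p2 o2 v2 =
        (h0 ++ invres p1 o1 u1) ++ [⟨p2, ObjAct.inv o2⟩, ⟨p2, ObjAct.res v2⟩] from rfl,
        List.prefix_append_right_inj] at he2
    have hu : e = ⟨p2, ObjAct.res u2⟩ :=
      (List.cons_prefix_cons.mp (List.cons_prefix_cons.mp hx1).2).1
    have hv : e = ⟨p2, ObjAct.res v2⟩ :=
      (List.cons_prefix_cons.mp (List.cons_prefix_cons.mp hx2).2).1
    have : (⟨p2, ObjAct.res u2⟩ : ObjEv Proc Op Ret) = ⟨p2, ObjAct.res v2⟩ := hu.symm.trans hv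
    simp only [ObjEv.mk.injEq, ObjAct.res.injEq, true_and] at this
    exact hu2 this
  · have hmemB : h0 ++ invres p2 o2 u2 ++ invres p1 o1 u1 ∈ Spec := hB ▸ hmem
    obtain ⟨e, he1, he2⟩ := hdet _ hmemB _ hs2 (h0 ++ invres p2 o2 u2) p1 o1
      ⟨[⟨p1, ObjAct.res u1⟩], by rw [List.append_assoc]; rfl⟩ ⟨[⟨p1, ObjAct.res v1⟩], by rw [List.append_assoc]; rfl⟩
    have hx1 : [(⟨p1, ObjAct.inv o1⟩ : ObjEv Proc Op Ret), e] <+: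
        [⟨p1, ObjAct.inv o1⟩, ⟨p1, ObjAct.res u1⟩] := by
      rwa [show h0 ++ invres p2 o2 u2 ++ invres p1 o1 u1 =
        (h0 ++ invres p2 o2 u2) ++ [⟨p1, ObjAct.inv o1⟩, ⟨p1, ObjAct.res u1⟩] from rfl,
        List.prefix_append_right_inj] at he1
    have hx2 : [(⟨p1, ObjAct.inv o1⟩ : ObjEv Proc Op Ret), e] <+:
        [⟨p1, ObjAct.inv o1⟩, ⟨p1, ObjAct.res v1⟩] := by
      rwa [show h0 ++ invres p2 o2 u2 ++ invres p1 o1 v1 =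
        (h0 ++ invres p2 o2 u2) ++ [⟨p1, ObjAct.inv o1⟩, ⟨p1, ObjAct.res v1⟩] from rfl,
        List.prefix_append_right_inj] at he2
    have hu : e = ⟨p1, ObjAct.res u1⟩ :=
      (List.cons_prefix_cons.mp (List.cons_prefix_cons.mp hx1).2).1
    have hv : e = ⟨p1, ObjAct.res v1⟩ :=
      (List.cons_prefix_cons.mp (List.cons_prefix_cons.mp hx2).2).1
    have : (⟨p1, ObjAct.res u1⟩ : ObjEv Proc Op Ret) = ⟨p1, ObjAct.res v1⟩ := hu.symm.trans hv
    simp only [ObjEv.mk.injEq, ObjAct.res.injEq, true_and] at this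
    exact hu1 this

end WMM
end

section
/- Let Snapshot be the single-writer snapshot object over a value set W. Let w ≠ w' ∈ W, let p1, p2, p3 ∈ P, and let h1, h2 be complete histories of Snapshot with procs(h1) ∩ procs(h2) = ∅ such that h1 ⊑ ⟨p1: update(w) ⇒ ack⟩ · ⟨p3: scan ⇒ v⟩, where v(p1) = w and v(p) = ⊥ for p ≠ p1, and h2 ⊑ ⟨p2: update(w') ⇒ ack⟩ · ⟨p2: scan ⇒ v'⟩, where v'(p2) = w' and v'(p) = ⊥ for p ≠ p2. Then h1 and h2 are not weakly mergeable in spec(Snapshot) after the empty history. -/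
set_option autoImplicit false

namespace WMM

universe u v

/-! In a sequential snapshot history the set of processes whose component is defined only grows,
so the sets of defined components returned by any two scans are comparable under inclusion.
In any merge of the two histories, one scan sees `p1` defined but not `p2` and the other sees
`p2` defined but not `p1`; since `p1 ≠ p2` by disjointness, no linearization of it can be
in the specification. -/

theorem Reorder.mem_iff {α : Type u} {R : α → α → Prop} {s s' : List α} (h : Reorder R s s')
    {a : α} : a ∈ s ↔ a ∈ s' := by
  obtain ⟨f, hf, -⟩ := h
  simp only [List.mem_iff_get]
  constructor
  · rintro ⟨i, rfl⟩
    exact ⟨f i, hf i⟩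
  · rintro ⟨j, rfl⟩
    exact ⟨f.symm j, by simpa using (hf (f.symm j)).symm⟩

theorem Shuffle.mem_iff {α : Type u} {s1 s2 s : List α} (h : Shuffle s1 s2 s) {a : α} :
    a ∈ s ↔ a ∈ s1 ∨ a ∈ s2 := by
  induction h with
  | nil => simp
  | left x _ ih | right x _ ih =>
    simp only [List.mem_append, List.mem_singleton, ih]
    tauto

section Snapshot

variable {Proc W : Type} [DecidableEq Proc]

def written (s : Proc → Option W) : Set Proc := {p | (s p).isSome}

theorem written_subset_written_update (s : Proc → Option W) (p : Proc) (w : W) :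
    written s ⊆ written (Function.update s p (some w)) := by
  intro q hq
  by_cases hqp : q = p
  · subst hqp
    simp [written]
  · simpa [written, Function.update_of_ne hqp] using hq

namespace SnapSpecFrom

theorem written_subset_of_scan {s : Proc → Option W}
    {h : List (ObjEv Proc (SnapOp W) (SnapRet Proc W))} (hs : SnapSpecFrom s h) {q : Proc}
    {u : Proc → Option W} (hu : ⟨q, ObjAct.res (SnapRet.vec u)⟩ ∈ h) :
    written s ⊆ written u := by
  induction hs with
  | nil => simp at hu
  | update s p w _ ih =>
    simp only [List.mem_cons, ObjEv.mk.injEq, ObjAct.res.injEq, reduceCtorEq, and_false,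
      false_or] at hu
    exact (written_subset_written_update s p w).trans (ih hu)
  | scan s p _ ih =>
    simp only [List.mem_cons, ObjEv.mk.injEq, reduceCtorEq, and_false, false_or,
      ObjAct.res.injEq, SnapRet.vec.injEq] at hu
    rcases hu with ⟨-, rfl⟩ | hu
    · exact subset_rfl
    · exact ih hu

theorem written_total_of_scans {s : Proc → Option W}
    {h : List (ObjEv Proc (SnapOp W) (SnapRet Proc W))} (hs : SnapSpecFrom s h) {q q' : Proc}
    {u u' : Proc → Option W} (hu : ⟨q, ObjAct.res (SnapRet.vec u)⟩ ∈ h)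
    (hu' : ⟨q', ObjAct.res (SnapRet.vec u')⟩ ∈ h) :
    written u ⊆ written u' ∨ written u' ⊆ written u := by
  induction hs with
  | nil => simp at hu
  | update s p w _ ih =>
    simp only [List.mem_cons, ObjEv.mk.injEq, ObjAct.res.injEq, reduceCtorEq, and_false,
      false_or] at hu hu'
    exact ih hu hu'
  | scan s p hs ih =>
    simp only [List.mem_cons, ObjEv.mk.injEq, reduceCtorEq, and_false, false_or,
      ObjAct.res.injEq, SnapRet.vec.injEq] at hu hu'
    rcases hu with ⟨-, rfl⟩ | hu <;> rcases hu' with ⟨-, rfl⟩ | hu'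
    · exact .inl subset_rfl
    · exact .inl (hs.written_subset_of_scan hu')
    · exact .inr (hs.written_subset_of_scan hu)
    · exact ih hu hu'

end SnapSpecFrom

theorem update_append_scan_mem_snapSpec (p q : Proc) (w : W) :
    invres p (SnapOp.update w) SnapRet.ack ++
      invres q SnapOp.scan (SnapRet.vec (fun r => if r = p then some w else none)) ∈
      SnapSpec Proc W := by
  have hv : (fun r => if r = p then some w else none) =
      Function.update (fun _ => (none : Option W)) p (some w) := by
    funext r
    simp [Function.update_apply]
  rw [hv]
  exact .update _ p w (.scan _ q (.nil _))

end Snapshot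

theorem snapshot_not_weakly_mergeable_general (Proc : Type) [DecidableEq Proc]
    (W : Type) (w w' : W) (p1 p2 p3 : Proc)
    (h1 h2 : List (ObjEv Proc (SnapOp W) (SnapRet Proc W)))
    (hdisj : procsObj h1 ∩ procsObj h2 = ∅)
    (hl1 : Reorder linRel h1
      (invres p1 (SnapOp.update w) SnapRet.ack ++
        invres p3 SnapOp.scan
          (SnapRet.vec (fun p => if p = p1 then some w else none))))
    (hl2 : Reorder linRel h2
      (invres p2 (SnapOp.update w') SnapRet.ack ++
        invres p2 SnapOp.scan
          (SnapRet.vec (fun p => if p = p2 then some w' else none)))) :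
    ¬ WeaklySpecMergeableAfter (SnapSpec Proc W) [] h1 h2 := by
  intro hmerge
  obtain ⟨h, hsh, H, hH, hre⟩ := hmerge ⟨_, update_append_scan_mem_snapSpec p1 p3 w, hl1⟩
    ⟨_, update_append_scan_mem_snapSpec p2 p2 w', hl2⟩
  have hp12 : p1 ≠ p2 := by
    intro hp
    refine Set.eq_empty_iff_forall_notMem.mp hdisj p1
      ⟨⟨⟨p1, ObjAct.inv (SnapOp.update w)⟩, hl1.mem_iff.2 ?_, rfl⟩,
        ⟨⟨p2, ObjAct.inv (SnapOp.update w')⟩, hl2.mem_iff.2 ?_, hp.symm⟩⟩ <;> simp [invres]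
  have hscan1 : (⟨p3, ObjAct.res (SnapRet.vec (fun p => if p = p1 then some w else none))⟩ :
      ObjEv Proc (SnapOp W) (SnapRet Proc W)) ∈ H :=
    hre.mem_iff.1 (hsh.mem_iff.2 (.inl (hl1.mem_iff.2 (by simp [invres]))))
  have hscan2 : (⟨p2, ObjAct.res (SnapRet.vec (fun p => if p = p2 then some w' else none))⟩ :
      ObjEv Proc (SnapOp W) (SnapRet Proc W)) ∈ H :=
    hre.mem_iff.1 (hsh.mem_iff.2 (.inr (hl2.mem_iff.2 (by simp [invres]))))
  rcases SnapSpecFrom.written_total_of_scans hH hscan1 hscan2 with hsub | hsub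
  · simpa [written, hp12] using hsub (show p1 ∈ written _ by simp [written])
  · simpa [written, hp12.symm] using hsub (show p2 ∈ written _ by simp [written])

/-- the two snapshot histories of the introduction example are not
weakly mergeable in the snapshot specification after the empty history. -/
theorem snapshot_not_weakly_mergeable (Proc : Type) [Fintype Proc] [DecidableEq Proc]
    (W : Type) (w w' : W) (hww : w ≠ w') (p1 p2 p3 : Proc)
    (h1 h2 : List (ObjEv Proc (SnapOp W) (SnapRet Proc W)))
    (hc1 : CompleteH h1) (hc2 : CompleteH h2)
    (hdisj : procsObj h1 ∩ procsObj h2 = ∅)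
    (hl1 : Reorder linRel h1
      (invres p1 (SnapOp.update w) SnapRet.ack ++
        invres p3 SnapOp.scan
          (SnapRet.vec (fun p => if p = p1 then some w else none))))
    (hl2 : Reorder linRel h2
      (invres p2 (SnapOp.update w') SnapRet.ack ++
        invres p2 SnapOp.scan
          (SnapRet.vec (fun p => if p = p2 then some w' else none)))) :
    ¬ WeaklySpecMergeableAfter (SnapSpec Proc W) [] h1 h2 :=
  snapshot_not_weakly_mergeable_general Proc W w w' p1 p2 p3 h1 h2 hdisj hl1 hl2

end WMM
end
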